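/- arXiv:math/0604352 — 6 statements merged into one kernel-verified Lean document; each statement's English description precedes it below -/
import Mathlib

section
/- Let (X, X') be an exchangeable pair of random variables taking values in a separable metric space 𝒳, let F : 𝒳 × 𝒳 → ℝ be square-integrable and antisymmetric, and let f : 𝒳 → ℝ be square-integrable with E(F(X,X') | X) = f(X) a.s. Define Δ(X) := (1/2) E(|(f(X) - f(X')) F(X,X')| | X). If E(Δ(X)) < ∞, then Var(f(X)) = (1/2) E((f(X) - f(X')) F(X,X')). -/
/-!
Exchangeability and antisymmetry of `F` give `E[f(X') F(X,X')] = -E[f(X) F(X,X')]`, so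
`E[(f(X) - f(X')) F(X,X')] = 2 E[f(X) F(X,X')]`. Conditioning on `X` turns the latter into
`2 E[f(X)²]`, and the same conditioning gives `E[f(X)] = E[F(X,X')] = 0`, so `E[f(X)²]` is the
variance.
-/

open MeasureTheory

namespace MeasureTheory

variable {Ω : Type*} {m m₀ : MeasurableSpace Ω} {μ : Measure Ω}

theorem integral_mul_eq_integral_sq_of_condExp_eq (hm : m ≤ m₀) [SigmaFinite (μ.trim hm)]
    {g h : Ω → ℝ} (hg : StronglyMeasurable[m] g) (hgh : Integrable (g * h) μ)
    (hh : Integrable h μ) (hcond : μ[h | m] =ᵐ[μ] g) :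
    ∫ ω, g ω * h ω ∂μ = ∫ ω, g ω ^ 2 ∂μ := by
  calc ∫ ω, g ω * h ω ∂μ = ∫ ω, (μ[g * h | m]) ω ∂μ := (integral_condExp hm).symm
    _ = ∫ ω, g ω ^ 2 ∂μ := by
      refine integral_congr_ae ?_
      filter_upwards [condExp_mul_of_stronglyMeasurable_left hg hgh hh, hcond] with ω hpull hω
      rw [hpull, Pi.mul_apply, hω, sq]

end MeasureTheory

namespace ProbabilityTheory

variable {Ω α : Type*} [MeasurableSpace Ω] [MeasurableSpace α] {μ : Measure Ω} {X Y : Ω → α}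

def ExchangeablePair (μ : Measure Ω) (X Y : Ω → α) : Prop :=
  μ.map (fun ω => (X ω, Y ω)) = μ.map (fun ω => (Y ω, X ω))

namespace ExchangeablePair

variable (hXY : ExchangeablePair μ X Y) (hX : AEMeasurable X μ) (hY : AEMeasurable Y μ)
include hXY hX hY

theorem integral_comp_swap {E : Type*} [NormedAddCommGroup E] [NormedSpace ℝ E] {G : α × α → E}
    (hG : AEStronglyMeasurable G (μ.map fun ω => (X ω, Y ω))) :
    ∫ ω, G (Y ω, X ω) ∂μ = ∫ ω, G (X ω, Y ω) ∂μ := by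
  rw [← integral_map (hX.prodMk hY) hG, ← integral_map (hY.prodMk hX) (hXY ▸ hG), hXY]

variable {F : α → α → ℝ} (hF : Measurable (Function.uncurry F))
  (hFanti : ∀ᵐ ω ∂μ, F (X ω) (Y ω) = -F (Y ω) (X ω))
include hF hFanti

theorem integral_comp_snd_mul_antisymm {g : α → ℝ} (hg : Measurable g) :
    ∫ ω, g (Y ω) * F (X ω) (Y ω) ∂μ = -∫ ω, g (X ω) * F (X ω) (Y ω) ∂μ := by
  have hG : Measurable fun p : α × α => g p.1 * F p.2 p.1 :=
    (hg.comp measurable_fst).mul (hF.comp measurable_swap)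
  calc ∫ ω, g (Y ω) * F (X ω) (Y ω) ∂μ = ∫ ω, g (X ω) * F (Y ω) (X ω) ∂μ :=
        hXY.integral_comp_swap hX hY hG.aestronglyMeasurable
    _ = -∫ ω, g (X ω) * F (X ω) (Y ω) ∂μ := by
      rw [← integral_neg]
      refine integral_congr_ae ?_
      filter_upwards [hFanti] with ω hω
      simp only [hω, mul_neg, neg_neg]

theorem integral_antisymm_eq_zero : ∫ ω, F (X ω) (Y ω) ∂μ = 0 := by
  have h := hXY.integral_comp_snd_mul_antisymm hX hY hF hFanti (g := fun _ => 1) measurable_const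
  simp only [one_mul] at h
  linarith

theorem integral_sub_mul_antisymm {g : α → ℝ} (hg : Measurable g)
    (hgF : Integrable (fun ω => g (X ω) * F (X ω) (Y ω)) μ)
    (hΔ : Integrable (fun ω => (g (X ω) - g (Y ω)) * F (X ω) (Y ω)) μ) :
    ∫ ω, (g (X ω) - g (Y ω)) * F (X ω) (Y ω) ∂μ = 2 * ∫ ω, g (X ω) * F (X ω) (Y ω) ∂μ := by
  have hg'F : Integrable (fun ω => g (Y ω) * F (X ω) (Y ω)) μ :=
    (hgF.sub hΔ).congr (ae_of_all _ fun ω => by simp only [Pi.sub_apply]; ring)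
  simp_rw [sub_mul]
  rw [integral_sub hgF hg'F, hXY.integral_comp_snd_mul_antisymm hX hY hF hFanti hg]
  ring

end ExchangeablePair

end ProbabilityTheory

open ProbabilityTheory

theorem variance_eq_of_exchangeable_pair_general
    {Ω 𝒳 : Type*} [MeasurableSpace Ω]
    [MeasurableSpace 𝒳]
    (μ : Measure Ω) [IsProbabilityMeasure μ]
    (X X' : Ω → 𝒳) (hX : Measurable X) (hX' : Measurable X')
    (hexch : Measure.map (fun ω => (X ω, X' ω)) μ = Measure.map (fun ω => (X' ω, X ω)) μ)
    (F : 𝒳 → 𝒳 → ℝ) (hF : Measurable (Function.uncurry F))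
    (hFL2 : MemLp (fun ω => F (X ω) (X' ω)) 2 μ)
    (hFanti : ∀ᵐ ω ∂μ, F (X ω) (X' ω) = - F (X' ω) (X ω))
    (f : 𝒳 → ℝ) (hf : Measurable f)
    (hfL2 : MemLp (fun ω => f (X ω)) 2 μ)
    (hcond : μ[(fun ω => F (X ω) (X' ω)) | MeasurableSpace.comap X inferInstance]
      =ᵐ[μ] fun ω => f (X ω))
    (hΔfin : Integrable (fun ω => (f (X ω) - f (X' ω)) * F (X ω) (X' ω)) μ) :
    ProbabilityTheory.variance (fun ω => f (X ω)) μ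
      = (1 / 2) * ∫ ω, (f (X ω) - f (X' ω)) * F (X ω) (X' ω) ∂μ := by
  have hexch : ExchangeablePair μ X X' := hexch
  have hm : MeasurableSpace.comap X inferInstance ≤ _ := hX.comap_le
  have hfF : Integrable (fun ω => f (X ω) * F (X ω) (X' ω)) μ := hfL2.integrable_mul hFL2
  have hmean : ∫ ω, f (X ω) ∂μ = 0 := by
    rw [← integral_congr_ae hcond, integral_condExp hm,
      hexch.integral_antisymm_eq_zero hX.aemeasurable hX'.aemeasurable hF hFanti]
  have hsq : ∫ ω, f (X ω) * F (X ω) (X' ω) ∂μ = ∫ ω, f (X ω) ^ 2 ∂μ :=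
    integral_mul_eq_integral_sq_of_condExp_eq hm
      (hf.comp (comap_measurable X)).stronglyMeasurable hfF (hFL2.integrable one_le_two) hcond
  rw [variance_of_integral_eq_zero hfL2.aemeasurable hmean,
    hexch.integral_sub_mul_antisymm hX.aemeasurable hX'.aemeasurable hF hFanti hf hfF hΔfin, hsq]
  ring

/-- **Stein's method for concentration, Theorem 1.5 (i).**
For an exchangeable pair `(X, X')` with antisymmetric square-integrable `F` satisfying
`E(F(X,X') | X) = f(X)` a.s., if `Δ(X) := (1/2) E(|(f(X)-f(X')) F(X,X')| | X)` has finite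
expectation (i.e. `(f(X)-f(X')) F(X,X')` is integrable), then
`Var(f(X)) = (1/2) E((f(X)-f(X')) F(X,X'))`. -/
theorem variance_eq_of_exchangeable_pair
    {Ω 𝒳 : Type*} [MeasurableSpace Ω]
    [MetricSpace 𝒳] [TopologicalSpace.SeparableSpace 𝒳]
    [MeasurableSpace 𝒳] [BorelSpace 𝒳]
    (μ : Measure Ω) [IsProbabilityMeasure μ]
    (X X' : Ω → 𝒳) (hX : Measurable X) (hX' : Measurable X')
    (hexch : Measure.map (fun ω => (X ω, X' ω)) μ = Measure.map (fun ω => (X' ω, X ω)) μ)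
    (F : 𝒳 → 𝒳 → ℝ) (hF : Measurable (Function.uncurry F))
    (hFL2 : MemLp (fun ω => F (X ω) (X' ω)) 2 μ)
    (hFanti : ∀ᵐ ω ∂μ, F (X ω) (X' ω) = - F (X' ω) (X ω))
    (f : 𝒳 → ℝ) (hf : Measurable f)
    (hfL2 : MemLp (fun ω => f (X ω)) 2 μ)
    (hcond : μ[(fun ω => F (X ω) (X' ω)) | MeasurableSpace.comap X inferInstance]
      =ᵐ[μ] fun ω => f (X ω))
    (hΔfin : Integrable (fun ω => (f (X ω) - f (X' ω)) * F (X ω) (X' ω)) μ) :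
    ProbabilityTheory.variance (fun ω => f (X ω)) μ
      = (1 / 2) * ∫ ω, (f (X ω) - f (X' ω)) * F (X ω) (X' ω) ∂μ :=
  variance_eq_of_exchangeable_pair_general μ X X' hX hX' hexch F hF hFL2 hFanti f hf hfL2 hcond
    hΔfin
end

section
/- Let (X, X') be an exchangeable pair of random variables taking values in a separable metric space 𝒳, let F : 𝒳 × 𝒳 → ℝ be square-integrable and antisymmetric, and let f : 𝒳 → ℝ be square-integrable with E(F(X,X') | X) = f(X) a.s. Define Δ(X) := (1/2) E(|(f(X) - f(X')) F(X,X')| | X). Assume E(e^{θ f(X)} |F(X,X')|) < ∞ for all θ ∈ ℝ, and suppose there exist nonnegative constants B and C such that Δ(X) ≤ B f(X) + C almost surely. Then for all t ≥ 0, P(f(X) ≤ -t) ≤ exp(-t² / (2C)). -/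
open MeasureTheory ProbabilityTheory Real Set

/-!
Herbst-type argument for `M θ = E e^{θ f(X)}`. Conditioning on `X` gives
`M' θ = E[e^{θ f(X)} F(X, X')]`; exchangeability and antisymmetry rewrite this as
`½ E[(e^{θ f(X)} - e^{θ f(X')}) F(X, X')]`. Then `|e^p - e^q| ≤ |p - q| (e^p + e^q) / 2`, the
same exchangeability and conditioning back on `X` give
`|M' θ| ≤ |θ| E[e^{θ f(X)} Δ(X)] ≤ |θ| (B M' θ + C M θ)`.
For `θ ≤ 0` this forces `M' θ ≥ C θ M θ`, hence `M θ ≤ exp (C θ² / 2)`, and the Chernoff bound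
at `θ = -t / C` gives the tail estimate.
-/

namespace Real

lemma one_sub_mul_exp_le_one (u : ℝ) : (1 - u) * exp u ≤ 1 :=
  calc (1 - u) * exp u ≤ exp (-u) * exp u :=
        mul_le_mul_of_nonneg_right (by linarith [add_one_le_exp (-u)]) (exp_pos u).le
    _ = 1 := by rw [← exp_add, neg_add_cancel, exp_zero]

lemma exp_le_one_add_abs_mul_exp (u : ℝ) : exp u ≤ 1 + |u| * exp u := by
  rcases le_total u 0 with hu | hu
  · linarith [exp_le_one_iff.mpr hu, mul_nonneg (abs_nonneg u) (exp_pos u).le]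
  · rw [abs_of_nonneg hu]
    linarith [one_sub_mul_exp_le_one u]

lemma abs_exp_sub_exp_le (p q : ℝ) : |exp p - exp q| ≤ |p - q| * (exp p + exp q) / 2 := by
  set φ : ℝ → ℝ := fun d => d * (exp d + 1) / 2 - (exp d - 1)
  have hφ : ∀ d, HasDerivAt φ ((1 - (1 - d) * exp d) / 2) d := fun d =>
    ((((hasDerivAt_id' d).mul ((hasDerivAt_exp d).add_const 1)).div_const 2).sub
      ((hasDerivAt_exp d).sub_const 1)).congr_deriv (by ring)
  have hmono : Monotone φ := monotone_of_deriv_nonneg (fun d => (hφ d).differentiableAt)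
    fun d => by rw [(hφ d).deriv]; linarith [one_sub_mul_exp_le_one d]
  -- the normalized inequality `|e^d - 1| ≤ |d| (e^d + 1) / 2` is `φ d` having the sign of `d`
  have key : |exp (p - q) - 1| ≤ |p - q| * (exp (p - q) + 1) / 2 := by
    have hφ0 : φ 0 = 0 := by simp [φ]
    rcases le_total 0 (p - q) with hd | hd
    · have := hmono hd
      rw [abs_of_nonneg hd, abs_of_nonneg (sub_nonneg.2 (one_le_exp hd))]
      simp only [φ] at this hφ0
      linarith
    · have := hmono hd
      rw [abs_of_nonpos hd, abs_of_nonpos (sub_nonpos.2 (exp_le_one_iff.2 hd))]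
      simp only [φ] at this hφ0
      linarith
  calc |exp p - exp q| = exp q * |exp (p - q) - 1| := by
        rw [exp_sub, ← abs_of_pos (exp_pos q), ← abs_mul, abs_of_pos (exp_pos q)]
        field_simp
    _ ≤ exp q * (|p - q| * (exp (p - q) + 1) / 2) := by gcongr
    _ = |p - q| * (exp p + exp q) / 2 := by rw [exp_sub]; field_simp

end Real

lemma le_mul_exp_sq_of_mul_le_deriv {φ φ' : ℝ → ℝ} {c a : ℝ} (ha : a ≤ 0)
    (hφ : ∀ θ, HasDerivAt φ (φ' θ) θ) (hφ' : ∀ θ ≤ 0, c * θ * φ θ ≤ φ' θ) :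
    φ a ≤ φ 0 * exp (c * a ^ 2 / 2) := by
  set ψ : ℝ → ℝ := fun θ => φ θ * exp (-(c * θ ^ 2 / 2))
  have hψ : ∀ θ, HasDerivAt ψ ((φ' θ - c * θ * φ θ) * exp (-(c * θ ^ 2 / 2))) θ := fun θ => by
    have hq : HasDerivAt (fun θ : ℝ => -(c * θ ^ 2 / 2)) (-(c * θ)) θ :=
      (((hasDerivAt_pow 2 θ).const_mul c).div_const 2).neg.congr_deriv (by norm_num; ring)
    exact ((hφ θ).mul hq.exp).congr_deriv (by ring)
  have hmono : MonotoneOn ψ (Icc a 0) :=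
    monotoneOn_of_deriv_nonneg (convex_Icc a 0)
      (fun θ _ => (hψ θ).continuousAt.continuousWithinAt)
      (fun θ _ => (hψ θ).differentiableAt.differentiableWithinAt) fun θ hθ => by
        rw [interior_Icc] at hθ
        rw [(hψ θ).deriv]
        exact mul_nonneg (sub_nonneg.2 (hφ' θ hθ.2.le)) (exp_pos _).le
  have hψa : ψ a ≤ φ 0 := by simpa [ψ] using hmono ⟨le_rfl, ha⟩ ⟨ha, le_rfl⟩ ha
  calc φ a = ψ a * exp (c * a ^ 2 / 2) := by
        simp only [ψ, mul_assoc, ← exp_add, neg_add_cancel, exp_zero, mul_one]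
    _ ≤ φ 0 * exp (c * a ^ 2 / 2) := mul_le_mul_of_nonneg_right hψa (exp_pos _).le

lemma measureReal_le_neg_le_exp_of_mgf_le {Ω : Type*} [MeasurableSpace Ω] {μ : Measure Ω}
    [IsFiniteMeasure μ] {Y : Ω → ℝ} {c t : ℝ} (hc : 0 < c) (ht : 0 ≤ t)
    (hint : ∀ θ ≤ 0, Integrable (fun ω => exp (θ * Y ω)) μ)
    (hmgf : ∀ θ ≤ 0, mgf Y μ θ ≤ exp (c * θ ^ 2 / 2)) :
    μ.real {ω | Y ω ≤ -t} ≤ exp (-t ^ 2 / (2 * c)) := by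
  have hθ : -t / c ≤ 0 := div_nonpos_of_nonpos_of_nonneg (neg_nonpos.2 ht) hc.le
  calc μ.real {ω | Y ω ≤ -t} ≤ exp (-(-t / c) * -t) * mgf Y μ (-t / c) :=
        measure_le_le_exp_mul_mgf (-t) hθ (hint _ hθ)
    _ ≤ exp (-(-t / c) * -t) * exp (c * (-t / c) ^ 2 / 2) := by gcongr; exact hmgf _ hθ
    _ = exp (-t ^ 2 / (2 * c)) := by rw [← exp_add]; congr 1; field_simp; ring

lemma integrable_exp_mul_of_integrable_exp_mul_abs {Ω : Type*} [MeasurableSpace Ω]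
    {μ : Measure Ω} [IsFiniteMeasure μ] {Y : Ω → ℝ} {θ : ℝ} (hY : AEStronglyMeasurable Y μ)
    (h : Integrable (fun ω => exp (θ * Y ω) * |Y ω|) μ) :
    Integrable (fun ω => exp (θ * Y ω)) μ := by
  refine ((integrable_const 1).add (h.const_mul |θ|)).mono'
    (continuous_exp.comp_aestronglyMeasurable (hY.const_mul θ)) (ae_of_all _ fun ω => ?_)
  rw [norm_of_nonneg (exp_pos _).le]
  calc exp (θ * Y ω) ≤ 1 + |θ * Y ω| * exp (θ * Y ω) := exp_le_one_add_abs_mul_exp _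
    _ = 1 + |θ| * (exp (θ * Y ω) * |Y ω|) := by rw [abs_mul]; ring

section CondExp

variable {Ω : Type*} {m mΩ : MeasurableSpace Ω} {μ : Measure Ω} {h P R : Ω → ℝ}

lemma integral_mul_condExp (hm : m ≤ mΩ) [SigmaFinite (μ.trim hm)]
    (hh : StronglyMeasurable[m] h) (hhP : Integrable (h * P) μ) (hP : Integrable P μ) :
    ∫ ω, h ω * μ[P|m] ω ∂μ = ∫ ω, h ω * P ω ∂μ :=
  (integral_congr_ae (condExp_mul_of_stronglyMeasurable_left hh hhP hP).symm).trans
    (integral_condExp hm)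

lemma integrable_mul_condExp (hh : StronglyMeasurable[m] h) (hhP : Integrable (h * P) μ)
    (hP : Integrable P μ) : Integrable (h * μ[P|m]) μ :=
  integrable_condExp.congr (condExp_mul_of_stronglyMeasurable_left hh hhP hP)

lemma integrable_mul_of_condExp_le (hm : m ≤ mΩ) [SigmaFinite (μ.trim hm)]
    (hh : StronglyMeasurable[m] h) (hh0 : 0 ≤ h) (hP : Integrable P μ) (hP0 : 0 ≤ P)
    (hhR : Integrable (h * R) μ) (hPR : μ[P|m] ≤ᵐ[μ] R) : Integrable (h * P) μ := by
  have hcond0 : 0 ≤ᵐ[μ] μ[P|m] := condExp_nonneg (ae_of_all _ hP0)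
  have hhP' : Integrable (h * μ[P|m]) μ := by
    refine hhR.mono' ((hh.mono hm).aestronglyMeasurable.mul
      integrable_condExp.aestronglyMeasurable) ?_
    filter_upwards [hPR, hcond0] with ω h1 h2
    rw [Pi.mul_apply, norm_of_nonneg (mul_nonneg (hh0 ω) h2)]
    exact mul_le_mul_of_nonneg_left h1 (hh0 ω)
  -- `h` is truncated at level `n` so that the pull-out property applies to a bounded factor
  set hn : ℕ → Ω → ℝ := fun n ω => min (h ω) n
  have hn_meas : ∀ n, StronglyMeasurable[m] (hn n) :=
    fun n => (hh.measurable.min measurable_const).stronglyMeasurable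
  have hn_int : ∀ n, Integrable (fun ω => hn n ω * P ω) μ := fun n =>
    hP.bdd_mul ((hn_meas n).mono hm).aestronglyMeasurable (c := n) (ae_of_all _ fun ω => by
      rw [norm_of_nonneg (le_min (hh0 ω) n.cast_nonneg)]
      exact min_le_right _ _)
  have hn_le : ∀ n, ∫ ω, hn n ω * P ω ∂μ ≤ ∫ ω, h ω * μ[P|m] ω ∂μ := fun n => by
    rw [← integral_mul_condExp hm (hn_meas n) (hn_int n) hP]
    refine integral_mono_ae (integrable_mul_condExp (hn_meas n) (hn_int n) hP) hhP' ?_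
    filter_upwards [hcond0] with ω hω
    exact mul_le_mul_of_nonneg_right (min_le_left _ _) hω
  have hsup : ∀ ω, ⨆ n : ℕ, ENNReal.ofReal (hn n ω * P ω) = ENNReal.ofReal (h ω * P ω) := by
    intro ω
    refine le_antisymm (iSup_le fun n => ?_) ?_
    · exact ENNReal.ofReal_le_ofReal (mul_le_mul_of_nonneg_right (min_le_left _ _) (hP0 ω))
    · obtain ⟨n, hhn⟩ := exists_nat_ge (h ω)
      exact le_iSup_of_le n (le_of_eq (by simp only [hn, min_eq_left hhn]))
  refine ⟨(hh.mono hm).aestronglyMeasurable.mul hP.aestronglyMeasurable, ?_⟩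
  show HasFiniteIntegral (fun ω => h ω * P ω) μ
  rw [hasFiniteIntegral_iff_ofReal (ae_of_all _ fun ω => mul_nonneg (hh0 ω) (hP0 ω))]
  calc ∫⁻ ω, ENNReal.ofReal (h ω * P ω) ∂μ
      = ⨆ n : ℕ, ∫⁻ ω, ENNReal.ofReal (hn n ω * P ω) ∂μ := by
        simp_rw [← hsup]
        exact lintegral_iSup' (fun n => (hn_int n).aemeasurable.ennreal_ofReal)
          (ae_of_all _ fun ω i j hij => ENNReal.ofReal_le_ofReal
            (mul_le_mul_of_nonneg_right (min_le_min_left _ (Nat.cast_le.2 hij)) (hP0 ω)))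
    _ ≤ ENNReal.ofReal (∫ ω, h ω * μ[P|m] ω ∂μ) := iSup_le fun n => by
        rw [← ofReal_integral_eq_lintegral_ofReal (hn_int n)
          (ae_of_all _ fun ω => mul_nonneg (le_min (hh0 ω) n.cast_nonneg) (hP0 ω))]
        exact ENNReal.ofReal_le_ofReal (hn_le n)
    _ < ⊤ := ENNReal.ofReal_lt_top

lemma integral_mul_le_of_condExp_le (hm : m ≤ mΩ) [SigmaFinite (μ.trim hm)]
    (hh : StronglyMeasurable[m] h) (hh0 : 0 ≤ h) (hP : Integrable P μ) (hP0 : 0 ≤ P)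
    (hhR : Integrable (h * R) μ) (hPR : μ[P|m] ≤ᵐ[μ] R) :
    ∫ ω, h ω * P ω ∂μ ≤ ∫ ω, h ω * R ω ∂μ := by
  have hhP := integrable_mul_of_condExp_le hm hh hh0 hP hP0 hhR hPR
  rw [← integral_mul_condExp hm hh hhP hP]
  refine integral_mono_ae (integrable_mul_condExp hh hhP hP) hhR ?_
  filter_upwards [hPR] with ω hω
  exact mul_le_mul_of_nonneg_left hω (hh0 ω)

lemma integrable_mul_abs_of_condExp_eq {G g : Ω → ℝ} (hm : m ≤ mΩ)
    (hh : StronglyMeasurable[m] h) (hh0 : 0 ≤ h) (hG : Integrable G μ)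
    (hhG : Integrable (fun ω => h ω * |G ω|) μ) (hcond : μ[G|m] =ᵐ[μ] g) :
    Integrable (fun ω => h ω * |g ω|) μ := by
  refine (integrable_mul_condExp (P := fun ω => |G ω|) hh hhG hG.abs).mono'
    ((hh.mono hm).aestronglyMeasurable.mul (continuous_abs.comp_aestronglyMeasurable
      (integrable_condExp.aestronglyMeasurable.congr hcond))) ?_
  filter_upwards [abs_condExp_ae_le_condExp_abs (m := m) (μ := μ) G, hcond] with ω h1 h2
  rw [norm_of_nonneg (mul_nonneg (hh0 ω) (abs_nonneg _)), ← h2]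
  exact mul_le_mul_of_nonneg_left h1 (hh0 ω)

end CondExp

section ExchangeablePair

variable {Ω 𝒳 : Type*} {m mΩ : MeasurableSpace Ω} [MeasurableSpace 𝒳] {μ : Measure Ω}
  {X X' : Ω → 𝒳} {F : 𝒳 → 𝒳 → ℝ} {f : 𝒳 → ℝ}

lemma two_mul_abs_integral_exp_mul_le
    (hexch : IdentDistrib (fun ω => (X ω, X' ω)) (fun ω => (X' ω, X ω)) μ μ)
    (hF : Measurable (Function.uncurry F)) (hFanti : ∀ᵐ ω ∂μ, F (X ω) (X' ω) = -F (X' ω) (X ω))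
    (hf : Measurable f) (θ : ℝ)
    (hG : Integrable (fun ω => exp (θ * f (X ω)) * F (X ω) (X' ω)) μ)
    (hW : Integrable (fun ω => exp (θ * f (X ω)) * |(f (X ω) - f (X' ω)) * F (X ω) (X' ω)|) μ) :
    2 * |∫ ω, exp (θ * f (X ω)) * F (X ω) (X' ω) ∂μ|
      ≤ |θ| * ∫ ω, exp (θ * f (X ω)) * |(f (X ω) - f (X' ω)) * F (X ω) (X' ω)| ∂μ := by
  set e : 𝒳 → ℝ := fun x => exp (θ * f x)
  set W : 𝒳 → 𝒳 → ℝ := fun x y => |(f x - f y) * F x y|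
  have hswap : ∀ K : 𝒳 → 𝒳 → ℝ, Measurable (Function.uncurry K) → IdentDistrib
      (fun ω => e (X' ω) * K (X ω) (X' ω)) (fun ω => e (X ω) * K (X' ω) (X ω)) μ μ :=
    fun K hK => hexch.comp ((((hf.comp measurable_snd).const_mul θ).exp).mul hK)
  have hFanti' : ∀ᵐ ω ∂μ, F (X' ω) (X ω) = -F (X ω) (X' ω) := by
    filter_upwards [hFanti] with ω h
    linarith
  have hGswap : (fun ω => e (X ω) * F (X' ω) (X ω)) =ᵐ[μ] fun ω => -(e (X ω) * F (X ω) (X' ω)) := by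
    filter_upwards [hFanti'] with ω h
    rw [h, mul_neg]
  have hWswap : (fun ω => e (X ω) * W (X' ω) (X ω)) =ᵐ[μ] fun ω => e (X ω) * W (X ω) (X' ω) := by
    filter_upwards [hFanti'] with ω h
    simp only [W, h, abs_mul, abs_neg, abs_sub_comm]
  have hWmeas : Measurable (Function.uncurry W) :=
    (((hf.comp measurable_fst).sub (hf.comp measurable_snd)).mul hF).abs
  have hG' : Integrable (fun ω => e (X' ω) * F (X ω) (X' ω)) μ :=
    (hswap F hF).integrable_iff.2 (hG.neg.congr hGswap.symm)
  have hW' : Integrable (fun ω => e (X' ω) * W (X ω) (X' ω)) μ :=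
    (hswap W hWmeas).integrable_iff.2 (hW.congr hWswap.symm)
  have hdiff : ∫ ω, (e (X ω) - e (X' ω)) * F (X ω) (X' ω) ∂μ
      = 2 * ∫ ω, e (X ω) * F (X ω) (X' ω) ∂μ := by
    simp_rw [sub_mul]
    rw [integral_sub hG hG', (hswap F hF).integral_eq, integral_congr_ae hGswap, integral_neg]
    ring
  calc 2 * |∫ ω, e (X ω) * F (X ω) (X' ω) ∂μ|
      = ‖∫ ω, (e (X ω) - e (X' ω)) * F (X ω) (X' ω) ∂μ‖ := by
        rw [hdiff, Real.norm_eq_abs, abs_mul, abs_two]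
    _ ≤ ∫ ω, |θ| / 2 * (e (X ω) * W (X ω) (X' ω) + e (X' ω) * W (X ω) (X' ω)) ∂μ := by
        refine norm_integral_le_of_norm_le ((hW.add hW').const_mul _) (ae_of_all _ fun ω => ?_)
        have h := abs_exp_sub_exp_le (θ * f (X ω)) (θ * f (X' ω))
        rw [← mul_sub, abs_mul] at h
        rw [Real.norm_eq_abs, abs_mul]
        calc |e (X ω) - e (X' ω)| * |F (X ω) (X' ω)|
            ≤ |θ| * |f (X ω) - f (X' ω)| * (e (X ω) + e (X' ω)) / 2 * |F (X ω) (X' ω)| :=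
              mul_le_mul_of_nonneg_right h (abs_nonneg _)
          _ = _ := by simp only [W, abs_mul]; ring
    _ = |θ| * ∫ ω, e (X ω) * W (X ω) (X' ω) ∂μ := by
        rw [integral_const_mul, integral_add hW hW', (hswap W hWmeas).integral_eq,
          integral_congr_ae hWswap]
        ring

lemma abs_integral_mul_exp_le_of_exchangeable [IsFiniteMeasure μ] (hm : m ≤ mΩ)
    (hexch : IdentDistrib (fun ω => (X ω, X' ω)) (fun ω => (X' ω, X ω)) μ μ)
    (hF : Measurable (Function.uncurry F)) (hFanti : ∀ᵐ ω ∂μ, F (X ω) (X' ω) = -F (X' ω) (X ω))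
    (hf : Measurable f) (hfX : StronglyMeasurable[m] fun ω => f (X ω))
    (hG : Integrable (fun ω => F (X ω) (X' ω)) μ)
    (hcond : μ[fun ω => F (X ω) (X' ω) | m] =ᵐ[μ] fun ω => f (X ω))
    (hprod : Integrable (fun ω => (f (X ω) - f (X' ω)) * F (X ω) (X' ω)) μ) {B C θ : ℝ}
    (hmgf : Integrable (fun ω => exp (θ * f (X ω)) * |F (X ω) (X' ω)|) μ)
    (hΔ : ∀ᵐ ω ∂μ, 1 / 2 * μ[fun ω => |(f (X ω) - f (X' ω)) * F (X ω) (X' ω)| | m] ω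
      ≤ B * f (X ω) + C) :
    |μ[fun ω => f (X ω) * exp (θ * f (X ω))]|
      ≤ |θ| * (B * μ[fun ω => f (X ω) * exp (θ * f (X ω))] + C * mgf (fun ω => f (X ω)) μ θ) := by
  set g : Ω → ℝ := fun ω => f (X ω)
  set e : Ω → ℝ := fun ω => exp (θ * g ω)
  have he : StronglyMeasurable[m] e := ((hfX.measurable.const_mul θ).exp).stronglyMeasurable
  have he0 : 0 ≤ e := fun ω => (exp_pos _).le
  have heg : Integrable (fun ω => e ω * |g ω|) μ :=
    integrable_mul_abs_of_condExp_eq hm he he0 hG hmgf hcond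
  have he_int : Integrable e μ :=
    integrable_exp_mul_of_integrable_exp_mul_abs (hfX.mono hm).aestronglyMeasurable heg
  have hge : Integrable (fun ω => g ω * e ω) μ :=
    heg.mono' ((hfX.mono hm).aestronglyMeasurable.mul he_int.1)
      (ae_of_all _ fun ω => by rw [norm_mul, Real.norm_eq_abs, norm_of_nonneg (he0 ω), mul_comm])
  have heG : Integrable (fun ω => e ω * F (X ω) (X' ω)) μ :=
    hmgf.mono' (he_int.1.mul hG.1)
      (ae_of_all _ fun ω => by
        rw [norm_mul, Real.norm_eq_abs, Real.norm_eq_abs, abs_of_nonneg (he0 ω)])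
  have hD : ∫ ω, e ω * F (X ω) (X' ω) ∂μ = μ[fun ω => g ω * e ω] := by
    rw [← integral_mul_condExp hm he heG hG]
    refine integral_congr_ae ?_
    filter_upwards [hcond] with ω h
    rw [h, mul_comm]
  have hR : Integrable (fun ω => e ω * (2 * (B * g ω + C))) μ :=
    ((hge.const_mul (2 * B)).add (he_int.const_mul (2 * C))).congr
      (ae_of_all _ fun ω => by simp only [Pi.add_apply]; ring)
  have hR_eq : ∫ ω, e ω * (2 * (B * g ω + C)) ∂μ
      = 2 * (B * μ[fun ω => g ω * e ω] + C * mgf g μ θ) := by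
    rw [integral_congr_ae (ae_of_all _ fun ω => show e ω * (2 * (B * g ω + C))
      = 2 * B * (g ω * e ω) + 2 * C * e ω by ring),
      integral_add (hge.const_mul _) (he_int.const_mul _), integral_const_mul, integral_const_mul]
    simp only [mgf]
    ring
  have hWR : μ[fun ω => |(f (X ω) - f (X' ω)) * F (X ω) (X' ω)| | m]
      ≤ᵐ[μ] fun ω => 2 * (B * g ω + C) := by
    filter_upwards [hΔ] with ω h
    linarith
  have hW := integrable_mul_of_condExp_le hm he he0 hprod.abs (fun _ => abs_nonneg _) hR hWR
  have hW_le := integral_mul_le_of_condExp_le hm he he0 hprod.abs (fun _ => abs_nonneg _) hR hWR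
  have hstein : 2 * |∫ ω, e ω * F (X ω) (X' ω) ∂μ|
      ≤ |θ| * ∫ ω, e ω * |(f (X ω) - f (X' ω)) * F (X ω) (X' ω)| ∂μ :=
    two_mul_abs_integral_exp_mul_le hexch hF hFanti hf θ heG hW
  rw [hD] at hstein
  change |μ[fun ω => g ω * e ω]| ≤ |θ| * (B * μ[fun ω => g ω * e ω] + C * mgf g μ θ)
  linarith [mul_le_mul_of_nonneg_left (hW_le.trans hR_eq.le) (abs_nonneg θ)]

end ExchangeablePair

lemma mul_mul_le_of_abs_le {B C θ D M : ℝ} (hB : 0 ≤ B) (hC : 0 ≤ C) (hθ : θ ≤ 0) (hM : 0 ≤ M)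
    (h : |D| ≤ |θ| * (B * D + C * M)) : C * θ * M ≤ D := by
  rw [abs_of_nonpos hθ] at h
  rcases le_total 0 D with hD | hD
  · nlinarith [mul_nonneg hC hM]
  · rw [abs_of_nonpos hD] at h
    nlinarith [mul_nonneg (mul_nonneg (neg_nonneg.2 hθ) hB) (neg_nonneg.2 hD)]

theorem lower_tail_of_exchangeable_pair_general
    {Ω 𝒳 : Type*} [MeasurableSpace Ω] [MeasurableSpace 𝒳]
    (μ : Measure Ω) [IsProbabilityMeasure μ]
    (X X' : Ω → 𝒳) (hX : Measurable X) (hX' : Measurable X')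
    (hexch : Measure.map (fun ω => (X ω, X' ω)) μ = Measure.map (fun ω => (X' ω, X ω)) μ)
    (F : 𝒳 → 𝒳 → ℝ) (hF : Measurable (Function.uncurry F))
    (hFanti : ∀ᵐ ω ∂μ, F (X ω) (X' ω) = - F (X' ω) (X ω))
    (f : 𝒳 → ℝ) (hf : Measurable f)
    (hcond : μ[(fun ω => F (X ω) (X' ω)) | MeasurableSpace.comap X inferInstance]
      =ᵐ[μ] fun ω => f (X ω))
    (hprod : Integrable (fun ω => (f (X ω) - f (X' ω)) * F (X ω) (X' ω)) μ)
    (hmgf : ∀ θ : ℝ, Integrable (fun ω => Real.exp (θ * f (X ω)) * |F (X ω) (X' ω)|) μ)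
    (B C : ℝ) (hB : 0 ≤ B)
    (hΔ : ∀ᵐ ω ∂μ,
      (1 / 2) * (μ[(fun ω' => |(f (X ω') - f (X' ω')) * F (X ω') (X' ω')|)
          | MeasurableSpace.comap X inferInstance]) ω
        ≤ B * f (X ω) + C)
    (t : ℝ) (ht : 0 ≤ t) :
    (μ {ω | f (X ω) ≤ -t}).toReal ≤ Real.exp (-t ^ 2 / (2 * C)) := by
  rcases le_or_gt C 0 with hC | hC
  · exact measureReal_le_one.trans
      (one_le_exp (div_nonneg_of_nonpos (neg_nonpos.2 (sq_nonneg t)) (by linarith)))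
  have hm := hX.comap_le
  have hswap : IdentDistrib (fun ω => (X ω, X' ω)) (fun ω => (X' ω, X ω)) μ μ :=
    ⟨(hX.prodMk hX').aemeasurable, (hX'.prodMk hX).aemeasurable, hexch⟩
  have hfX : StronglyMeasurable[MeasurableSpace.comap X inferInstance] fun ω => f (X ω) :=
    (hf.comp (comap_measurable X)).stronglyMeasurable
  have hG : Integrable (fun ω => F (X ω) (X' ω)) μ :=
    (hmgf 0).mono' (hF.comp (hX.prodMk hX')).aestronglyMeasurable (ae_of_all _ fun ω => by simp)
  have hexp : ∀ θ, Integrable (fun ω => exp (θ * f (X ω))) μ := fun θ =>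
    integrable_exp_mul_of_integrable_exp_mul_abs (hfX.mono hm).aestronglyMeasurable
      (integrable_mul_abs_of_condExp_eq hm ((hfX.measurable.const_mul θ).exp).stronglyMeasurable
        (fun _ => (exp_pos _).le) hG (hmgf θ) hcond)
  have hderiv : ∀ θ, HasDerivAt (mgf (fun ω => f (X ω)) μ)
      μ[fun ω => f (X ω) * exp (θ * f (X ω))] θ := fun θ =>
    hasDerivAt_mgf (by simp [integrableExpSet, hexp])
  refine measureReal_le_neg_le_exp_of_mgf_le hC ht (fun θ _ => hexp θ) fun θ hθ => ?_
  simpa [mgf_zero] using le_mul_exp_sq_of_mul_le_deriv hθ hderiv fun θ hθ =>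
    mul_mul_le_of_abs_le hB hC.le hθ mgf_nonneg <|
      abs_integral_mul_exp_le_of_exchangeable hm hswap hF hFanti hf hfX hG hcond hprod (hmgf θ) hΔ

/-- **Stein's method for concentration, Theorem 1.5 (ii), lower tail.**
For an exchangeable pair `(X, X')` with antisymmetric square-integrable `F` satisfying
`E(F(X,X') | X) = f(X)` a.s., set `Δ(X) := (1/2) E(|(f(X)-f(X')) F(X,X')| | X)`.
If `E(e^{θ f(X)} |F(X,X')|) < ∞` for all `θ`, and `Δ(X) ≤ B f(X) + C` a.s. for
nonnegative constants `B, C`, then `P(f(X) ≤ -t) ≤ exp(-t²/(2C))` for all `t ≥ 0`. -/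
theorem lower_tail_of_exchangeable_pair
    {Ω 𝒳 : Type*} [MeasurableSpace Ω]
    [MetricSpace 𝒳] [TopologicalSpace.SeparableSpace 𝒳]
    [MeasurableSpace 𝒳] [BorelSpace 𝒳]
    (μ : Measure Ω) [IsProbabilityMeasure μ]
    (X X' : Ω → 𝒳) (hX : Measurable X) (hX' : Measurable X')
    (hexch : Measure.map (fun ω => (X ω, X' ω)) μ = Measure.map (fun ω => (X' ω, X ω)) μ)
    (F : 𝒳 → 𝒳 → ℝ) (hF : Measurable (Function.uncurry F))
    (hFL2 : MemLp (fun ω => F (X ω) (X' ω)) 2 μ)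
    (hFanti : ∀ᵐ ω ∂μ, F (X ω) (X' ω) = - F (X' ω) (X ω))
    (f : 𝒳 → ℝ) (hf : Measurable f)
    (hfL2 : MemLp (fun ω => f (X ω)) 2 μ)
    (hcond : μ[(fun ω => F (X ω) (X' ω)) | MeasurableSpace.comap X inferInstance]
      =ᵐ[μ] fun ω => f (X ω))
    (hprod : Integrable (fun ω => (f (X ω) - f (X' ω)) * F (X ω) (X' ω)) μ)
    (hmgf : ∀ θ : ℝ, Integrable (fun ω => Real.exp (θ * f (X ω)) * |F (X ω) (X' ω)|) μ)
    (B C : ℝ) (hB : 0 ≤ B) (hC : 0 ≤ C)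
    (hΔ : ∀ᵐ ω ∂μ,
      (1 / 2) * (μ[(fun ω' => |(f (X ω') - f (X' ω')) * F (X ω') (X' ω')|)
          | MeasurableSpace.comap X inferInstance]) ω
        ≤ B * f (X ω) + C)
    (t : ℝ) (ht : 0 ≤ t) :
    (μ {ω | f (X ω) ≤ -t}).toReal ≤ Real.exp (-t ^ 2 / (2 * C)) :=
  lower_tail_of_exchangeable_pair_general μ X X' hX hX' hexch F hF hFanti f hf hcond hprod hmgf B C
    hB hΔ t ht
end

section
/- Let (X, X') be an exchangeable pair of random variables taking values in a separable metric space 𝒳, let F : 𝒳 × 𝒳 → ℝ be square-integrable and antisymmetric, and let f : 𝒳 → ℝ be square-integrable with E(F(X,X') | X) = f(X) a.s. Define Δ(X) := (1/2) E(|(f(X) - f(X')) F(X,X')| | X). Then for every positive integer k, E(f(X)^{2k}) ≤ (2k-1)^k E(Δ(X)^k). -/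
/-!
For a bounded measurable `g`, exchangeability, the antisymmetry of `F` and `E[F(X,X') | X] = f(X)`
give `2 E[g(X) f(X)] = E[(g(X) - g(X')) F(X,X')]`. Applying this to `f^{2k-1}`, bounding
`2 |a^{2k-1} - b^{2k-1}| ≤ (2k-1) (a^{2k-2} + b^{2k-2}) |a - b|`, using exchangeability once more
and pulling out the conditional expectation, one gets `E[f(X)^{2k}] ≤ (2k-1) E[f(X)^{2k-2} Δ(X)]`.
Hölder's inequality with exponents `k / (k-1)` and `k` bounds the right side by
`(2k-1) E[f(X)^{2k}]^{(k-1)/k} E[Δ(X)^k]^{1/k}`, and dividing gives the claim. Dividing needs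
`E[f(X)^{2k}] < ∞`, so `f` is first replaced by its clipping `g` to `[-n, n]`; the argument only
uses `|g x - g y| ≤ |f x - f y|` and `g² ≤ g f`, and `n → ∞` by monotone convergence.
-/

open MeasureTheory ProbabilityTheory ENNReal

section Elementary

open Finset

theorem pow_mul_pow_add_pow_mul_pow_le {x y : ℝ} (hx : 0 ≤ x) (hy : 0 ≤ y) (i j : ℕ) :
    x ^ i * y ^ j + x ^ j * y ^ i ≤ x ^ (i + j) + y ^ (i + j) := by
  have h : 0 ≤ (x ^ i - y ^ i) * (x ^ j - y ^ j) := by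
    rcases le_total x y with hxy | hxy
    · exact mul_nonneg_of_nonpos_of_nonpos (sub_nonpos.2 (pow_le_pow_left₀ hx hxy i))
        (sub_nonpos.2 (pow_le_pow_left₀ hx hxy j))
    · exact mul_nonneg (sub_nonneg.2 (pow_le_pow_left₀ hy hxy i))
        (sub_nonneg.2 (pow_le_pow_left₀ hy hxy j))
  rw [pow_add, pow_add]
  linear_combination h

theorem two_mul_sum_pow_mul_pow_le {x y : ℝ} (hx : 0 ≤ x) (hy : 0 ≤ y) (n : ℕ) :
    2 * ∑ i ∈ range (n + 1), x ^ i * y ^ (n - i) ≤ (n + 1) * (x ^ n + y ^ n) := by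
  calc 2 * ∑ i ∈ range (n + 1), x ^ i * y ^ (n - i)
      = ∑ i ∈ range (n + 1), (x ^ i * y ^ (n - i) + x ^ (n - i) * y ^ i) := by
        rw [sum_add_distrib, two_mul, ← sum_range_reflect _ (n + 1)]
        congr 1
        refine sum_congr rfl fun i hi => ?_
        have hin := mem_range.1 hi
        rw [show n - (n + 1 - 1 - i) = i by omega, show n + 1 - 1 - i = n - i by omega]
    _ ≤ ∑ i ∈ range (n + 1), (x ^ n + y ^ n) := by
        refine sum_le_sum fun i hi => ?_
        have hin := mem_range.1 hi
        simpa [show i + (n - i) = n by omega] using pow_mul_pow_add_pow_mul_pow_le hx hy i (n - i)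
    _ = (n + 1) * (x ^ n + y ^ n) := by simp [mul_add]

theorem two_mul_abs_pow_sub_pow_le (a b : ℝ) (n : ℕ) :
    2 * |a ^ (n + 1) - b ^ (n + 1)| ≤ (n + 1) * (|a| ^ n + |b| ^ n) * |a - b| := by
  have hsum : |∑ i ∈ range (n + 1), a ^ i * b ^ (n - i)|
      ≤ ∑ i ∈ range (n + 1), |a| ^ i * |b| ^ (n - i) :=
    (abs_sum_le_sum_abs _ _).trans_eq (by simp only [abs_mul, abs_pow])
  calc 2 * |a ^ (n + 1) - b ^ (n + 1)|
      = 2 * |∑ i ∈ range (n + 1), a ^ i * b ^ (n - i)| * |a - b| := by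
        rw [← geom_sum₂_mul, abs_mul, mul_assoc, Nat.add_sub_cancel]
    _ ≤ (n + 1) * (|a| ^ n + |b| ^ n) * |a - b| := by
        refine mul_le_mul_of_nonneg_right ?_ (abs_nonneg _)
        exact (mul_le_mul_of_nonneg_left hsum zero_le_two).trans
          (two_mul_sum_pow_mul_pow_le (abs_nonneg a) (abs_nonneg b) n)

theorem two_mul_pow_sub_pow_mul_le {a b s t : ℝ} (hab : |a - b| ≤ |s - t|) (c : ℝ) (m : ℕ) :
    2 * ((a ^ (2 * m + 1) - b ^ (2 * m + 1)) * c)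
      ≤ (2 * m + 1 : ℕ) * ((a ^ (2 * m) + b ^ (2 * m)) * |(s - t) * c|) :=
  calc 2 * ((a ^ (2 * m + 1) - b ^ (2 * m + 1)) * c)
      ≤ 2 * |a ^ (2 * m + 1) - b ^ (2 * m + 1)| * |c| := by
        rw [mul_assoc, ← abs_mul]; exact mul_le_mul_of_nonneg_left (le_abs_self _) zero_le_two
    _ ≤ (2 * m + 1 : ℕ) * (|a| ^ (2 * m) + |b| ^ (2 * m)) * |a - b| * |c| := by
        refine mul_le_mul_of_nonneg_right ?_ (abs_nonneg c)
        exact_mod_cast two_mul_abs_pow_sub_pow_le a b (2 * m)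
    _ ≤ (2 * m + 1 : ℕ) * (|a| ^ (2 * m) + |b| ^ (2 * m)) * |s - t| * |c| := by gcongr
    _ = (2 * m + 1 : ℕ) * ((a ^ (2 * m) + b ^ (2 * m)) * |(s - t) * c|) := by
        rw [pow_abs_two_mul, pow_abs_two_mul, abs_mul]; ring

end Elementary

noncomputable def clip (n : ℕ) (t : ℝ) : ℝ := max (min t n) (-n)

theorem continuous_clip (n : ℕ) : Continuous (clip n) :=
  (continuous_id.min continuous_const).max continuous_const

theorem abs_clip (n : ℕ) (t : ℝ) : |clip n t| = min |t| n := by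
  have hn : (0 : ℝ) ≤ n := n.cast_nonneg
  unfold clip
  rcases le_total 0 t with ht | ht
  · rw [abs_of_nonneg ht, max_eq_left (by simp; linarith), abs_of_nonneg (le_min ht hn)]
  · rw [abs_of_nonpos ht, min_eq_left (ht.trans hn), abs_of_nonpos (max_le ht (by linarith)),
      ← min_neg_neg, neg_neg]

theorem abs_clip_le (n : ℕ) (t : ℝ) : |clip n t| ≤ n :=
  (abs_clip n t).trans_le (min_le_right _ _)

theorem abs_clip_sub_clip_le (n : ℕ) (s t : ℝ) : |clip n s - clip n t| ≤ |s - t| :=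
  (abs_max_sub_max_le_abs _ _ _).trans <| (abs_min_sub_min_le_max _ _ _ _).trans (by simp)

theorem clip_sq_le_clip_mul (n : ℕ) (t : ℝ) : clip n t ^ 2 ≤ clip n t * t := by
  have hn : (0 : ℝ) ≤ n := n.cast_nonneg
  unfold clip
  rcases min_cases t (n : ℝ) with ⟨h1, h2⟩ | ⟨h1, h2⟩ <;>
    rcases max_cases (min t (n : ℝ)) (-n) with ⟨h3, h4⟩ | ⟨h3, h4⟩ <;>
    simp only [h1] at * <;> nlinarith

section Lintegral

variable {Ω : Type*} [MeasurableSpace Ω] {μ : Measure Ω}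

theorem lintegral_pow_le_of_le_mul_lintegral_pow_mul {u v : Ω → ℝ≥0∞} (hu : AEMeasurable u μ)
    (hv : AEMeasurable v μ) {c : ℝ≥0∞} {m : ℕ} (hfin : ∫⁻ ω, u ω ^ (m + 1) ∂μ ≠ ∞)
    (h : ∫⁻ ω, u ω ^ (m + 1) ∂μ ≤ c * ∫⁻ ω, u ω ^ m * v ω ∂μ) :
    ∫⁻ ω, u ω ^ (m + 1) ∂μ ≤ c ^ (m + 1) * ∫⁻ ω, v ω ^ (m + 1) ∂μ := by
  set A := ∫⁻ ω, u ω ^ (m + 1) ∂μ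
  set B := ∫⁻ ω, v ω ^ (m + 1) ∂μ
  rcases eq_or_ne A 0 with hA | hA
  · simp [hA]
  obtain ⟨q, hq_def⟩ : ∃ q : ℝ, q = 1 / (m + 1) := ⟨_, rfl⟩
  have hq : q * (m + 1) = 1 := by rw [hq_def]; field_simp
  have hq0 : 0 ≤ q := by rw [hq_def]; positivity
  have hp0 : 0 ≤ 1 - q := by rw [hq_def, sub_nonneg, div_le_one (by positivity)]; simp
  have hp : (1 - q) * (m + 1) = m := by linear_combination -hq
  have hHolder : ∫⁻ ω, u ω ^ m * v ω ∂μ ≤ A ^ (1 - q) * B ^ q := by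
    convert lintegral_mul_norm_pow_le (hu.pow_const (m + 1)) (hv.pow_const (m + 1))
      hp0 hq0 (sub_add_cancel 1 q) using 3 with ω
    simp only [← rpow_natCast, ← rpow_mul, Nat.cast_succ]
    rw [mul_comm _ (1 - q), hp, mul_comm _ q, hq, rpow_one]
  have hAq : A ^ q ≤ c * B ^ q := by
    refine (ENNReal.mul_le_mul_iff_right (rpow_pos (pos_iff_ne_zero.2 hA) hfin).ne'
      (rpow_ne_top_of_nonneg hp0 hfin)).1 ?_
    calc A ^ (1 - q) * A ^ q = A := by rw [← rpow_add _ _ hA hfin, sub_add_cancel, rpow_one]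
      _ ≤ c * (A ^ (1 - q) * B ^ q) := h.trans (mul_le_mul_right hHolder c)
      _ = A ^ (1 - q) * (c * B ^ q) := by ring
  calc A = (A ^ q) ^ (m + 1) := by rw [← rpow_natCast, ← rpow_mul, Nat.cast_succ, hq, rpow_one]
    _ ≤ (c * B ^ q) ^ (m + 1) := by gcongr
    _ = c ^ (m + 1) * B := by
        rw [mul_pow, ← rpow_natCast (B ^ q), ← rpow_mul, Nat.cast_succ, hq, rpow_one]

theorem lintegral_ofReal_sq_pow_le_of_integral_le [IsFiniteMeasure μ] {φ Δ : Ω → ℝ}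
    (hφ : AEStronglyMeasurable φ μ) {C : ℝ} (hφC : ∀ ω, |φ ω| ≤ C) (hΔ : Integrable Δ μ)
    (hΔ0 : 0 ≤ᵐ[μ] Δ) {c : ℝ} (hc : 0 ≤ c) {m : ℕ}
    (h : ∫ ω, φ ω ^ (2 * m + 2) ∂μ ≤ c * ∫ ω, φ ω ^ (2 * m) * Δ ω ∂μ) :
    ∫⁻ ω, ENNReal.ofReal (φ ω ^ 2) ^ (m + 1) ∂μ
      ≤ ENNReal.ofReal c ^ (m + 1) * ∫⁻ ω, ENNReal.ofReal (Δ ω) ^ (m + 1) ∂μ := by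
  have hpow : ∀ j ω, ENNReal.ofReal (φ ω ^ 2) ^ j = ENNReal.ofReal (φ ω ^ (2 * j)) :=
    fun j ω => by rw [← ofReal_pow (sq_nonneg _), ← pow_mul]
  have hφpow : ∀ j, Integrable (fun ω => φ ω ^ j) μ := fun j =>
    .of_bound (hφ.pow j) (C ^ j) (ae_of_all _ fun ω =>
      (abs_pow (φ ω) j).trans_le (pow_le_pow_left₀ (abs_nonneg _) (hφC ω) j))
  have hA : ∫⁻ ω, ENNReal.ofReal (φ ω ^ 2) ^ (m + 1) ∂μ
      = ENNReal.ofReal (∫ ω, φ ω ^ (2 * m + 2) ∂μ) := by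
    simp_rw [hpow]
    exact (ofReal_integral_eq_lintegral_ofReal (hφpow _)
      (ae_of_all _ fun ω => (even_two_mul (m + 1)).pow_nonneg _)).symm
  have hM : ∫⁻ ω, ENNReal.ofReal (φ ω ^ 2) ^ m * ENNReal.ofReal (Δ ω) ∂μ
      = ENNReal.ofReal (∫ ω, φ ω ^ (2 * m) * Δ ω ∂μ) := by
    have hint : Integrable (fun ω => φ ω ^ (2 * m) * Δ ω) μ :=
      hΔ.bdd_mul (hφ.pow _) (ae_of_all _ fun ω =>
        (abs_pow (φ ω) _).trans_le (pow_le_pow_left₀ (abs_nonneg _) (hφC ω) _))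
    rw [ofReal_integral_eq_lintegral_ofReal hint
      (hΔ0.mono fun ω hω => mul_nonneg ((even_two_mul m).pow_nonneg _) hω)]
    exact lintegral_congr fun ω => by rw [hpow, ofReal_mul ((even_two_mul m).pow_nonneg _)]
  refine lintegral_pow_le_of_le_mul_lintegral_pow_mul (hφ.aemeasurable.pow_const 2).ennreal_ofReal
    hΔ.aemeasurable.ennreal_ofReal (hA ▸ ofReal_ne_top) ?_
  rw [hA, hM, ← ofReal_mul hc]
  exact ofReal_le_ofReal h

theorem lintegral_ofReal_pow_two_mul_eq_iSup_clip {φ : Ω → ℝ} (hφ : Measurable φ) (k : ℕ) :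
    ∫⁻ ω, ENNReal.ofReal (φ ω ^ (2 * k)) ∂μ
      = ⨆ n : ℕ, ∫⁻ ω, ENNReal.ofReal (clip n (φ ω) ^ 2) ^ k ∂μ := by
  have hclip : ∀ (n : ℕ) t, ENNReal.ofReal (clip n t ^ 2) ^ k
      = ENNReal.ofReal (min |t| n ^ (2 * k)) := fun n t => by
    rw [← sq_abs, abs_clip, ← ofReal_pow (sq_nonneg _), ← pow_mul]
  have hsup : ∀ t : ℝ,
      ⨆ n : ℕ, ENNReal.ofReal (min |t| n ^ (2 * k)) = ENNReal.ofReal (t ^ (2 * k)) := by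
    refine fun t => le_antisymm (iSup_le fun n => ofReal_le_ofReal ?_) (le_iSup_of_le ⌈|t|⌉₊ ?_)
    · rw [← pow_abs_two_mul t]
      exact pow_le_pow_left₀ (le_min (abs_nonneg t) n.cast_nonneg) (min_le_left _ _) _
    · rw [min_eq_left (Nat.le_ceil _), pow_abs_two_mul]
  simp_rw [hclip]
  rw [← lintegral_iSup (f := fun n ω => ENNReal.ofReal (min |φ ω| n ^ (2 * k)))
    (fun n => by fun_prop) (fun a b hab ω => ofReal_le_ofReal ?_)]
  · simp_rw [hsup]
  · exact pow_le_pow_left₀ (le_min (abs_nonneg _) a.cast_nonneg)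
      (min_le_min_left _ (Nat.cast_le.2 hab)) _

end Lintegral

theorem integral_mul_condExp_of_bound {Ω : Type*} {m m₀ : MeasurableSpace Ω} {μ : Measure Ω}
    [IsFiniteMeasure μ] (hm : m ≤ m₀) {g H : Ω → ℝ} (hg : StronglyMeasurable[m] g)
    (hH : Integrable H μ) (c : ℝ) (hgc : ∀ᵐ ω ∂μ, ‖g ω‖ ≤ c) :
    ∫ ω, g ω * μ[H | m] ω ∂μ = ∫ ω, g ω * H ω ∂μ :=
  calc ∫ ω, g ω * μ[H | m] ω ∂μ = ∫ ω, μ[g * H | m] ω ∂μ :=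
        integral_congr_ae (condExp_stronglyMeasurable_mul_of_bound hm hg hH c hgc).symm
    _ = ∫ ω, g ω * H ω ∂μ := integral_condExp hm

section ExchangeablePair

variable {Ω 𝒳 : Type*} [MeasurableSpace Ω] [MeasurableSpace 𝒳] {μ : Measure Ω} {X X' : Ω → 𝒳}

theorem integral_swap_of_exchangeable (hX : Measurable X) (hX' : Measurable X')
    (hexch : μ.map (fun ω => (X ω, X' ω)) = μ.map (fun ω => (X' ω, X ω)))
    {H : 𝒳 → 𝒳 → ℝ} (hH : Measurable (Function.uncurry H)) :
    ∫ ω, H (X' ω) (X ω) ∂μ = ∫ ω, H (X ω) (X' ω) ∂μ :=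
  ((IdentDistrib.mk (hX.prodMk hX').aemeasurable (hX'.prodMk hX).aemeasurable hexch).comp
    hH).integral_eq.symm

theorem integrable_comp_mul_of_bound [IsFiniteMeasure μ] {Y : Ω → 𝒳} (hY : Measurable Y)
    {g : 𝒳 → ℝ} (hg : Measurable g) {c : ℝ} (hgc : ∀ x, |g x| ≤ c) {H : Ω → ℝ}
    (hH : Integrable H μ) : Integrable (fun ω => g (Y ω) * H ω) μ :=
  hH.bdd_mul (hg.comp hY).aestronglyMeasurable (ae_of_all _ fun ω => hgc (Y ω))

theorem two_mul_integral_mul_eq_integral_sub_mul [IsFiniteMeasure μ] (hX : Measurable X)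
    (hX' : Measurable X')
    (hexch : μ.map (fun ω => (X ω, X' ω)) = μ.map (fun ω => (X' ω, X ω)))
    {F : 𝒳 → 𝒳 → ℝ} (hF : Measurable (Function.uncurry F))
    (hFint : Integrable (fun ω => F (X ω) (X' ω)) μ)
    (hFanti : ∀ᵐ ω ∂μ, F (X ω) (X' ω) = - F (X' ω) (X ω)) {f : 𝒳 → ℝ}
    (hcond : μ[(fun ω => F (X ω) (X' ω)) | MeasurableSpace.comap X inferInstance]
      =ᵐ[μ] fun ω => f (X ω))
    {g : 𝒳 → ℝ} (hg : Measurable g) {c : ℝ} (hgc : ∀ x, |g x| ≤ c) :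
    2 * ∫ ω, g (X ω) * f (X ω) ∂μ = ∫ ω, (g (X ω) - g (X' ω)) * F (X ω) (X' ω) ∂μ := by
  have hcondExp : ∫ ω, g (X ω) * f (X ω) ∂μ = ∫ ω, g (X ω) * F (X ω) (X' ω) ∂μ := by
    rw [← integral_mul_condExp_of_bound (g := fun ω => g (X ω)) hX.comap_le
      (hg.comp (comap_measurable X)).stronglyMeasurable hFint c (ae_of_all _ fun ω => hgc (X ω))]
    exact integral_congr_ae (hcond.mono fun ω hω => congrArg (g (X ω) * ·) hω.symm)
  have hswap : ∫ ω, g (X' ω) * F (X ω) (X' ω) ∂μ = - ∫ ω, g (X ω) * F (X ω) (X' ω) ∂μ := by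
    rw [← integral_neg, ← integral_swap_of_exchangeable hX hX' hexch
      (H := fun x y => g y * F x y) ((hg.comp measurable_snd).mul hF)]
    exact integral_congr_ae (hFanti.mono fun ω hω => by simp [hω])
  simp_rw [sub_mul]
  rw [integral_sub (integrable_comp_mul_of_bound hX hg hgc hFint)
    (integrable_comp_mul_of_bound hX' hg hgc hFint), hswap, hcondExp]
  ring

theorem integral_add_mul_abs_eq_two_mul_integral_mul_condExp [IsFiniteMeasure μ]
    (hX : Measurable X) (hX' : Measurable X')
    (hexch : μ.map (fun ω => (X ω, X' ω)) = μ.map (fun ω => (X' ω, X ω)))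
    {F : 𝒳 → 𝒳 → ℝ} (hF : Measurable (Function.uncurry F))
    (hFanti : ∀ᵐ ω ∂μ, F (X ω) (X' ω) = - F (X' ω) (X ω)) {f : 𝒳 → ℝ} (hf : Measurable f)
    (hprod : Integrable (fun ω => (f (X ω) - f (X' ω)) * F (X ω) (X' ω)) μ)
    {w : 𝒳 → ℝ} (hw : Measurable w) {c : ℝ} (hwc : ∀ x, |w x| ≤ c) :
    ∫ ω, (w (X ω) + w (X' ω)) * |(f (X ω) - f (X' ω)) * F (X ω) (X' ω)| ∂μ
      = 2 * ∫ ω, w (X ω) * μ[(fun ω' => |(f (X ω') - f (X' ω')) * F (X ω') (X' ω')|)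
          | MeasurableSpace.comap X inferInstance] ω ∂μ := by
  have hswap : ∫ ω, w (X' ω) * |(f (X ω) - f (X' ω)) * F (X ω) (X' ω)| ∂μ
      = ∫ ω, w (X ω) * |(f (X ω) - f (X' ω)) * F (X ω) (X' ω)| ∂μ := by
    rw [← integral_swap_of_exchangeable hX hX' hexch
      (H := fun x y => w y * |(f x - f y) * F x y|) (by fun_prop)]
    refine integral_congr_ae (hFanti.mono fun ω hω => ?_)
    simp only [hω, abs_mul, abs_neg, abs_sub_comm]
  simp_rw [add_mul]
  rw [integral_add (integrable_comp_mul_of_bound hX hw hwc hprod.abs)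
      (integrable_comp_mul_of_bound hX' hw hwc hprod.abs), hswap,
    integral_mul_condExp_of_bound (g := fun ω => w (X ω)) hX.comap_le
      (hw.comp (comap_measurable X)).stronglyMeasurable hprod.abs c
      (ae_of_all _ fun ω => hwc (X ω))]
  ring

theorem integral_pow_le_mul_integral_pow_mul_condExp [IsFiniteMeasure μ]
    (hX : Measurable X) (hX' : Measurable X')
    (hexch : μ.map (fun ω => (X ω, X' ω)) = μ.map (fun ω => (X' ω, X ω)))
    {F : 𝒳 → 𝒳 → ℝ} (hF : Measurable (Function.uncurry F))
    (hFint : Integrable (fun ω => F (X ω) (X' ω)) μ)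
    (hFanti : ∀ᵐ ω ∂μ, F (X ω) (X' ω) = - F (X' ω) (X ω)) {f : 𝒳 → ℝ} (hf : Measurable f)
    (hfint : Integrable (fun ω => f (X ω)) μ)
    (hcond : μ[(fun ω => F (X ω) (X' ω)) | MeasurableSpace.comap X inferInstance]
      =ᵐ[μ] fun ω => f (X ω))
    (hprod : Integrable (fun ω => (f (X ω) - f (X' ω)) * F (X ω) (X' ω)) μ)
    {g : 𝒳 → ℝ} (hg : Measurable g) {c : ℝ} (hgc : ∀ x, |g x| ≤ c)
    (hgf : ∀ x y, |g x - g y| ≤ |f x - f y|) (hsq : ∀ x, g x ^ 2 ≤ g x * f x) (m : ℕ) :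
    ∫ ω, g (X ω) ^ (2 * m + 2) ∂μ
      ≤ (2 * m + 1 : ℕ) * ∫ ω, g (X ω) ^ (2 * m) *
          ((1 / 2) * μ[(fun ω' => |(f (X ω') - f (X' ω')) * F (X ω') (X' ω')|)
            | MeasurableSpace.comap X inferInstance] ω) ∂μ := by
  set D := μ[(fun ω' => |(f (X ω') - f (X' ω')) * F (X ω') (X' ω')|)
    | MeasurableSpace.comap X inferInstance]
  have hpow : ∀ j x, |g x ^ j| ≤ c ^ j := fun j x =>
    (abs_pow (g x) j).trans_le (pow_le_pow_left₀ (abs_nonneg _) (hgc x) j)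
  have hgpow : ∀ j, Measurable fun x => g x ^ j := fun j => hg.pow_const j
  have hsq_le : ∫ ω, g (X ω) ^ (2 * m + 2) ∂μ ≤ ∫ ω, g (X ω) ^ (2 * m + 1) * f (X ω) ∂μ := by
    refine integral_mono
      (.of_bound ((hgpow _).comp hX).aestronglyMeasurable _ (ae_of_all _ fun ω => hpow _ (X ω)))
      (integrable_comp_mul_of_bound hX (hgpow _) (hpow _) hfint) fun ω => ?_
    have := mul_le_mul_of_nonneg_left (hsq (X ω)) ((even_two_mul m).pow_nonneg (g (X ω)))
    linear_combination this
  have hodd : ∫ ω, 2 * ((g (X ω) ^ (2 * m + 1) - g (X' ω) ^ (2 * m + 1)) * F (X ω) (X' ω)) ∂μ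
      ≤ ∫ ω, (2 * m + 1 : ℕ) * ((g (X ω) ^ (2 * m) + g (X' ω) ^ (2 * m)) *
          |(f (X ω) - f (X' ω)) * F (X ω) (X' ω)|) ∂μ := by
    refine integral_mono ?_ ?_ fun ω => two_mul_pow_sub_pow_mul_le (hgf _ _) _ m
    · simpa only [sub_mul, Pi.sub_apply] using
        ((integrable_comp_mul_of_bound hX (hgpow _) (hpow _) hFint).sub
          (integrable_comp_mul_of_bound hX' (hgpow _) (hpow _) hFint)).const_mul 2
    · simpa only [add_mul, Pi.add_apply] using
        ((integrable_comp_mul_of_bound hX (hgpow _) (hpow _) hprod.abs).add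
          (integrable_comp_mul_of_bound hX' (hgpow _) (hpow _) hprod.abs)).const_mul _
  rw [integral_const_mul, integral_const_mul, ← two_mul_integral_mul_eq_integral_sub_mul hX hX'
      hexch hF hFint hFanti hcond (hgpow _) (hpow _),
    integral_add_mul_abs_eq_two_mul_integral_mul_condExp hX hX' hexch hF hFanti hf hprod
      (hgpow _) (hpow _)] at hodd
  have hhalf : ∫ ω, g (X ω) ^ (2 * m) * ((1 / 2) * D ω) ∂μ
      = (1 / 2) * ∫ ω, g (X ω) ^ (2 * m) * D ω ∂μ := by
    rw [← integral_const_mul]; congr 1 with ω; ring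
  rw [hhalf]
  linarith

end ExchangeablePair

theorem moment_bound_of_exchangeable_pair_general
    {Ω 𝒳 : Type*} [MeasurableSpace Ω]
    [MeasurableSpace 𝒳]
    (μ : Measure Ω) [IsProbabilityMeasure μ]
    (X X' : Ω → 𝒳) (hX : Measurable X) (hX' : Measurable X')
    (hexch : Measure.map (fun ω => (X ω, X' ω)) μ = Measure.map (fun ω => (X' ω, X ω)) μ)
    (F : 𝒳 → 𝒳 → ℝ) (hF : Measurable (Function.uncurry F))
    (hFL2 : MemLp (fun ω => F (X ω) (X' ω)) 2 μ)
    (hFanti : ∀ᵐ ω ∂μ, F (X ω) (X' ω) = - F (X' ω) (X ω))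
    (f : 𝒳 → ℝ) (hf : Measurable f)
    (hfL2 : MemLp (fun ω => f (X ω)) 2 μ)
    (hcond : μ[(fun ω => F (X ω) (X' ω)) | MeasurableSpace.comap X inferInstance]
      =ᵐ[μ] fun ω => f (X ω))
    (hprod : Integrable (fun ω => (f (X ω) - f (X' ω)) * F (X ω) (X' ω)) μ)
    (k : ℕ) (hk : 0 < k) :
    ∫⁻ ω, ENNReal.ofReal ((f (X ω)) ^ (2 * k)) ∂μ
      ≤ ((2 * k - 1 : ℕ) : ENNReal) ^ k *
        ∫⁻ ω, ENNReal.ofReal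
          (((1 / 2) * (μ[(fun ω' => |(f (X ω') - f (X' ω')) * F (X ω') (X' ω')|)
              | MeasurableSpace.comap X inferInstance]) ω) ^ k) ∂μ := by
  obtain ⟨m, rfl⟩ : ∃ m, k = m + 1 := ⟨k - 1, by omega⟩
  rw [show 2 * (m + 1) - 1 = 2 * m + 1 by omega,
    lintegral_ofReal_pow_two_mul_eq_iSup_clip (φ := fun ω => f (X ω)) (hf.comp hX)]
  set D := μ[(fun ω' => |(f (X ω') - f (X' ω')) * F (X ω') (X' ω')|)
    | MeasurableSpace.comap X inferInstance]
  have hD0 : 0 ≤ᵐ[μ] D := condExp_nonneg (ae_of_all _ fun ω => abs_nonneg _)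
  refine iSup_le fun n => ?_
  have hclip := integral_pow_le_mul_integral_pow_mul_condExp hX hX' hexch hF
    (hFL2.integrable one_le_two) hFanti hf (hfL2.integrable one_le_two) hcond hprod
    ((continuous_clip n).measurable.comp hf) (fun x => abs_clip_le n (f x))
    (fun x y => abs_clip_sub_clip_le n _ _) (fun x => clip_sq_le_clip_mul n (f x)) m
  have hΔ0 : 0 ≤ᵐ[μ] fun ω => (1 / 2) * D ω := hD0.mono fun ω hω => mul_nonneg one_half_pos.le hω
  calc _ ≤ ENNReal.ofReal (2 * m + 1 : ℕ) ^ (m + 1)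
          * ∫⁻ ω, ENNReal.ofReal ((1 / 2) * D ω) ^ (m + 1) ∂μ :=
        lintegral_ofReal_sq_pow_le_of_integral_le
          ((continuous_clip n).measurable.comp (hf.comp hX)).aestronglyMeasurable
          (fun ω => abs_clip_le n _) (integrable_condExp.const_mul _) hΔ0 (Nat.cast_nonneg _) hclip
    _ = _ := by
        rw [ofReal_natCast]
        exact congrArg _ (lintegral_congr_ae (hΔ0.mono fun ω hω => (ofReal_pow hω _).symm))

/-- **Stein's method for concentration, Theorem 1.5 (iii).**
For an exchangeable pair `(X, X')` with antisymmetric square-integrable `F` satisfying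
`E(F(X,X') | X) = f(X)` a.s., set `Δ(X) := (1/2) E(|(f(X)-f(X')) F(X,X')| | X)`.
Then for every positive integer `k`, `E(f(X)^{2k}) ≤ (2k-1)^k E(Δ(X)^k)`
(stated with upper Lebesgue integrals since either side may be infinite). -/
theorem moment_bound_of_exchangeable_pair
    {Ω 𝒳 : Type*} [MeasurableSpace Ω]
    [MetricSpace 𝒳] [TopologicalSpace.SeparableSpace 𝒳]
    [MeasurableSpace 𝒳] [BorelSpace 𝒳]
    (μ : Measure Ω) [IsProbabilityMeasure μ]
    (X X' : Ω → 𝒳) (hX : Measurable X) (hX' : Measurable X')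
    (hexch : Measure.map (fun ω => (X ω, X' ω)) μ = Measure.map (fun ω => (X' ω, X ω)) μ)
    (F : 𝒳 → 𝒳 → ℝ) (hF : Measurable (Function.uncurry F))
    (hFL2 : MemLp (fun ω => F (X ω) (X' ω)) 2 μ)
    (hFanti : ∀ᵐ ω ∂μ, F (X ω) (X' ω) = - F (X' ω) (X ω))
    (f : 𝒳 → ℝ) (hf : Measurable f)
    (hfL2 : MemLp (fun ω => f (X ω)) 2 μ)
    (hcond : μ[(fun ω => F (X ω) (X' ω)) | MeasurableSpace.comap X inferInstance]
      =ᵐ[μ] fun ω => f (X ω))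
    (hprod : Integrable (fun ω => (f (X ω) - f (X' ω)) * F (X ω) (X' ω)) μ)
    (k : ℕ) (hk : 0 < k) :
    ∫⁻ ω, ENNReal.ofReal ((f (X ω)) ^ (2 * k)) ∂μ
      ≤ ((2 * k - 1 : ℕ) : ENNReal) ^ k *
        ∫⁻ ω, ENNReal.ofReal
          (((1 / 2) * (μ[(fun ω' => |(f (X ω') - f (X' ω')) * F (X ω') (X' ω')|)
              | MeasurableSpace.comap X inferInstance]) ω) ^ k) ∂μ :=
  moment_bound_of_exchangeable_pair_general μ X X' hX hX' hexch F hF hFL2 hFanti f hf hfL2 hcond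
    hprod k hk
end

section
/- Let {a_{ij}}_{1 ≤ i,j ≤ n} be a collection of real numbers from [0,1]. Let π be drawn from the uniform distribution over the set of all permutations of {1, …, n}, and let X = Σ_{i=1}^n a_{i π(i)}. Then for every t ≥ 0, P(|X - E(X)| ≥ t) ≤ 2 exp(-t² / (4 E(X) + 2t)). -/
open Finset

lemma aux_exp (d : ℝ) (hd : 0 ≤ d) : 2 * (Real.exp d - 1) ≤ d * (Real.exp d + 1) := by
  have key : MonotoneOn (fun d : ℝ => d * (Real.exp d + 1) - 2 * (Real.exp d - 1))
      (Set.Ici (0:ℝ)) := by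
    have hder : ∀ x : ℝ, HasDerivAt (fun d : ℝ => d * (Real.exp d + 1) - 2 * (Real.exp d - 1))
        ((Real.exp x + 1) + x * Real.exp x - 2 * Real.exp x) x := by
      intro x
      have h1 : HasDerivAt (fun d : ℝ => d * (Real.exp d + 1))
          (1 * (Real.exp x + 1) + x * Real.exp x) x :=
        (hasDerivAt_id x).mul ((Real.hasDerivAt_exp x).add_const 1)
      have h2 : HasDerivAt (fun d : ℝ => 2 * (Real.exp d - 1)) (2 * Real.exp x) x :=
        (((Real.hasDerivAt_exp x).sub_const 1).const_mul 2)
      simpa [one_mul] using h1.fun_sub h2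
    apply monotoneOn_of_deriv_nonneg (convex_Ici 0)
    · exact (Continuous.continuousOn (by continuity))
    · intro x hx
      exact (hder x).differentiableAt.differentiableWithinAt
    · intro x hx
      rw [(hder x).deriv]
      simp only [Set.mem_Ioi, interior_Ici] at hx
      have h1 : (1 : ℝ) - x ≤ Real.exp (-x) := by linarith [Real.add_one_le_exp (-x)]
      have h2 : Real.exp (-x) * Real.exp x = 1 := by
        rw [← Real.exp_add]; simp
      nlinarith [Real.exp_pos x, hx.le]
  have h0 := key (Set.self_mem_Ici) (Set.mem_Ici.2 hd) hd
  simp at h0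
  linarith

lemma exp_pair (x y : ℝ) :
    (x - y) * (Real.exp x - Real.exp y) ≤ (x - y)^2 * (Real.exp x + Real.exp y) / 2 := by
  rcases le_total y x with h | h
  · have key := aux_exp (x - y) (by linarith)
    have hy := Real.exp_pos y
    have hxy : Real.exp x = Real.exp (x - y) * Real.exp y := by
      rw [← Real.exp_add]; ring_nf
    rw [hxy]
    have hc : (0:ℝ) ≤ (x - y) * Real.exp y / 2 :=
      div_nonneg (mul_nonneg (by linarith) hy.le) (by norm_num)
    have hm := mul_le_mul_of_nonneg_left key hc
    nlinarith [hm]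
  · have key := aux_exp (y - x) (by linarith)
    have hx := Real.exp_pos x
    have hxy : Real.exp y = Real.exp (y - x) * Real.exp x := by
      rw [← Real.exp_add]; ring_nf
    rw [hxy]
    have hc : (0:ℝ) ≤ (y - x) * Real.exp x / 2 :=
      div_nonneg (mul_nonneg (by linarith) hx.le) (by norm_num)
    have hm := mul_le_mul_of_nonneg_left key hc
    nlinarith [hm]

lemma exp_pair_thetaU (θ u v : ℝ) (hθ : 0 ≤ θ) :
    (u - v) * (Real.exp (θ * u) - Real.exp (θ * v))
      ≤ θ * ((u - v)^2 * (Real.exp (θ * u) + Real.exp (θ * v)) / 2) := by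
  rcases eq_or_lt_of_le hθ with rfl | hθ'
  · simp
  · have h := exp_pair (θ * u) (θ * v)
    nlinarith [h, hθ', sq_nonneg (u-v), Real.exp_pos (θ*u), Real.exp_pos (θ*v)]

lemma exp_pair_thetaL (θ u v : ℝ) (hθ : θ ≤ 0) :
    θ * ((u - v)^2 * (Real.exp (θ * u) + Real.exp (θ * v)) / 2)
      ≤ (u - v) * (Real.exp (θ * u) - Real.exp (θ * v)) := by
  rcases eq_or_lt_of_le hθ with rfl | hθ'
  · simp
  · have h := exp_pair (θ * u) (θ * v)
    nlinarith [h, hθ', sq_nonneg (u-v), Real.exp_pos (θ*u), Real.exp_pos (θ*v)]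

section HSBAux

variable {n : ℕ}


/-- reindexing sums over the symmetric group by right multiplication -/
lemma perm_reindex (F : Equiv.Perm (Fin n) → ℝ) (σ : Equiv.Perm (Fin n)) :
    ∑ p : Equiv.Perm (Fin n), F (p * σ) = ∑ p : Equiv.Perm (Fin n), F p :=
  Equiv.sum_comp (Equiv.mulRight σ) F

noncomputable def Xf (a : Fin n → Fin n → ℝ) (p : Equiv.Perm (Fin n)) : ℝ := ∑ i, a i (p i)

noncomputable def Dq (a : Fin n → Fin n → ℝ) (p : Equiv.Perm (Fin n)) (i j : Fin n) : ℝ :=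
  a i (p i) + a j (p j) - a i (p j) - a j (p i)

lemma X_swap (a : Fin n → Fin n → ℝ) (p : Equiv.Perm (Fin n)) (i j : Fin n) :
    Xf a (p * Equiv.swap i j) = Xf a p - Dq a p i j := by
  rcases eq_or_ne i j with rfl | hij
  · simp only [Dq, Equiv.swap_self]
    simp [Xf]
  · have key : ∑ k, (a k (p (Equiv.swap i j k)) - a k (p k))
        = ∑ k ∈ ({i, j} : Finset (Fin n)), (a k (p (Equiv.swap i j k)) - a k (p k)) := by
      refine (Finset.sum_subset (Finset.subset_univ _) ?_).symm
      intro k _ hk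
      simp only [Finset.mem_insert, Finset.mem_singleton, not_or] at hk
      rw [Equiv.swap_apply_of_ne_of_ne hk.1 hk.2]
      ring
    have hpair : ∑ k ∈ ({i, j} : Finset (Fin n)), (a k (p (Equiv.swap i j k)) - a k (p k))
        = (a i (p (Equiv.swap i j i)) - a i (p i)) + (a j (p (Equiv.swap i j j)) - a j (p j)) :=
      Finset.sum_pair hij
    rw [Equiv.swap_apply_left, Equiv.swap_apply_right] at hpair
    have : Xf a (p * Equiv.swap i j) - Xf a p = ∑ k, (a k (p (Equiv.swap i j k)) - a k (p k)) := by
      simp [Xf, Finset.sum_sub_distrib, Equiv.Perm.mul_apply]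
    rw [key, hpair] at this
    simp only [Dq]
    linarith

lemma Dq_swap (a : Fin n → Fin n → ℝ) (p : Equiv.Perm (Fin n)) (i j : Fin n) :
    Dq a (p * Equiv.swap i j) i j = - Dq a p i j := by
  simp only [Dq, Equiv.Perm.mul_apply, Equiv.swap_apply_left, Equiv.swap_apply_right]
  ring

lemma sum_Dq (a : Fin n → Fin n → ℝ) (p : Equiv.Perm (Fin n)) :
    ∑ i, ∑ j, Dq a p i j = 2 * n * Xf a p - 2 * (∑ i, ∑ j, a i j) := by
  have s1 : ∑ i : Fin n, ∑ _j : Fin n, a i (p i) = n * Xf a p := by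
    simp [Finset.sum_const, Xf, Finset.mul_sum]
  have s2 : ∑ i : Fin n, ∑ j : Fin n, a j (p j) = n * Xf a p := by
    rw [Finset.sum_comm]; exact s1
  have s3 : ∑ i : Fin n, ∑ j : Fin n, a i (p j) = ∑ i, ∑ j, a i j := by
    exact Finset.sum_congr rfl fun i _ => Equiv.sum_comp p (a i)
  have s4 : ∑ i : Fin n, ∑ j : Fin n, a j (p i) = ∑ i, ∑ j, a i j := by
    rw [Finset.sum_comm]
    exact Finset.sum_congr rfl fun i _ => Equiv.sum_comp p (a i)
  simp only [Dq, Finset.sum_add_distrib, Finset.sum_sub_distrib]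
  rw [s1, s2, s3, s4]; ring

lemma sum_fourpos (a : Fin n → Fin n → ℝ) (p : Equiv.Perm (Fin n)) :
    ∑ i, ∑ j, (a i (p i) + a j (p j) + a i (p j) + a j (p i))
      = 2 * n * Xf a p + 2 * (∑ i, ∑ j, a i j) := by
  have s1 : ∑ i : Fin n, ∑ _j : Fin n, a i (p i) = n * Xf a p := by
    simp [Finset.sum_const, Xf, Finset.mul_sum]
  have s2 : ∑ i : Fin n, ∑ j : Fin n, a j (p j) = n * Xf a p := by
    rw [Finset.sum_comm]; exact s1
  have s3 : ∑ i : Fin n, ∑ j : Fin n, a i (p j) = ∑ i, ∑ j, a i j := by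
    exact Finset.sum_congr rfl fun i _ => Equiv.sum_comp p (a i)
  have s4 : ∑ i : Fin n, ∑ j : Fin n, a j (p i) = ∑ i, ∑ j, a i j := by
    rw [Finset.sum_comm]
    exact Finset.sum_congr rfl fun i _ => Equiv.sum_comp p (a i)
  simp only [Finset.sum_add_distrib]
  rw [s1, s2, s3, s4]; ring

lemma sum_X_eq (a : Fin n → Fin n → ℝ) :
    (n : ℝ) * ∑ p : Equiv.Perm (Fin n), Xf a p
      = (n.factorial : ℝ) * ∑ i, ∑ j, a i j := by
  have h1 : ∑ p : Equiv.Perm (Fin n), Xf a p = ∑ i, ∑ p : Equiv.Perm (Fin n), a i (p i) := by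
    simp only [Xf]; exact Finset.sum_comm
  have h2 : ∀ i : Fin n, (n : ℝ) * ∑ p : Equiv.Perm (Fin n), a i (p i)
      = (n.factorial : ℝ) * ∑ j, a i j := by
    intro i
    have h3 : ∀ j : Fin n, ∑ p : Equiv.Perm (Fin n), a i (p i)
        = ∑ p : Equiv.Perm (Fin n), a i (p j) := by
      intro j
      calc ∑ p : Equiv.Perm (Fin n), a i (p i)
          = ∑ p : Equiv.Perm (Fin n), a i ((p * Equiv.swap i j) i) :=
            (perm_reindex (fun p => a i (p i)) (Equiv.swap i j)).symm
        _ = ∑ p : Equiv.Perm (Fin n), a i (p j) := by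
            simp [Equiv.Perm.mul_apply, Equiv.swap_apply_left]
    calc (n : ℝ) * ∑ p : Equiv.Perm (Fin n), a i (p i)
        = ∑ j : Fin n, ∑ p : Equiv.Perm (Fin n), a i (p i) := by
          simp [Finset.sum_const]
      _ = ∑ j : Fin n, ∑ p : Equiv.Perm (Fin n), a i (p j) :=
          Finset.sum_congr rfl fun j _ => h3 j
      _ = ∑ p : Equiv.Perm (Fin n), ∑ j : Fin n, a i (p j) := Finset.sum_comm
      _ = ∑ p : Equiv.Perm (Fin n), ∑ j : Fin n, a i j :=
          Finset.sum_congr rfl fun p _ => Equiv.sum_comp p (a i)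
      _ = (n.factorial : ℝ) * ∑ j, a i j := by
          simp [Finset.sum_const, Fintype.card_perm]
  rw [h1, Finset.mul_sum]
  rw [Finset.mul_sum]
  exact Finset.sum_congr rfl fun i _ => h2 i

lemma triple_comm (G : Equiv.Perm (Fin n) → Fin n → Fin n → ℝ) :
    ∑ p : Equiv.Perm (Fin n), ∑ i, ∑ j, G p i j
      = ∑ i, ∑ j, ∑ p : Equiv.Perm (Fin n), G p i j := by
  rw [Finset.sum_comm]
  exact Finset.sum_congr rfl fun i _ => Finset.sum_comm

lemma flip_sum (a : Fin n → Fin n → ℝ) (f : ℝ → ℝ) (i j : Fin n) :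
    ∑ p : Equiv.Perm (Fin n), Dq a p i j * f (Xf a (p * Equiv.swap i j))
      = - ∑ p : Equiv.Perm (Fin n), Dq a p i j * f (Xf a p) := by
  have h := perm_reindex (fun p => Dq a p i j * f (Xf a (p * Equiv.swap i j))) (Equiv.swap i j)
  simp only [mul_assoc, Equiv.swap_mul_self, mul_one, Dq_swap, neg_mul] at h
  rw [Finset.sum_neg_distrib] at h
  linarith

lemma master_id (a : Fin n → Fin n → ℝ) (f : ℝ → ℝ) :
    ∑ p : Equiv.Perm (Fin n), ∑ i, ∑ j,
        Dq a p i j * (f (Xf a p) - f (Xf a (p * Equiv.swap i j)))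
      = 2 * ∑ p : Equiv.Perm (Fin n),
          (2 * n * Xf a p - 2 * (∑ i, ∑ j, a i j)) * f (Xf a p) := by
  have split : ∑ p : Equiv.Perm (Fin n), ∑ i, ∑ j,
        Dq a p i j * (f (Xf a p) - f (Xf a (p * Equiv.swap i j)))
      = (∑ p : Equiv.Perm (Fin n), ∑ i, ∑ j, Dq a p i j * f (Xf a p))
        - ∑ p : Equiv.Perm (Fin n), ∑ i, ∑ j, Dq a p i j * f (Xf a (p * Equiv.swap i j)) := by
    simp [mul_sub, Finset.sum_sub_distrib]
  have h2 : ∑ p : Equiv.Perm (Fin n), ∑ i, ∑ j, Dq a p i j * f (Xf a (p * Equiv.swap i j))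
      = - ∑ p : Equiv.Perm (Fin n), ∑ i, ∑ j, Dq a p i j * f (Xf a p) := by
    rw [triple_comm, triple_comm (fun p i j => Dq a p i j * f (Xf a p))]
    rw [← Finset.sum_neg_distrib]
    refine Finset.sum_congr rfl fun i _ => ?_
    rw [← Finset.sum_neg_distrib]
    exact Finset.sum_congr rfl fun j _ => flip_sum a f i j
  have h3 : ∀ p : Equiv.Perm (Fin n), ∑ i, ∑ j, Dq a p i j * f (Xf a p)
      = (2 * n * Xf a p - 2 * (∑ i, ∑ j, a i j)) * f (Xf a p) := by
    intro p
    rw [← sum_Dq a p, Finset.sum_mul]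
    exact Finset.sum_congr rfl fun i _ => (Finset.sum_mul _ _ _).symm
  rw [split, h2]
  rw [Finset.sum_congr rfl fun p _ => h3 p]
  ring


lemma Dq_sq_le (a : Fin n → Fin n → ℝ) (ha : ∀ i j, a i j ∈ Set.Icc (0:ℝ) 1)
    (p : Equiv.Perm (Fin n)) (i j : Fin n) :
    (Dq a p i j)^2 ≤ 2 * (a i (p i) + a j (p j) + a i (p j) + a j (p i)) := by
  obtain ⟨h1, h1'⟩ := ha i (p i)
  obtain ⟨h2, h2'⟩ := ha j (p j)
  obtain ⟨h3, h3'⟩ := ha i (p j)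
  obtain ⟨h4, h4'⟩ := ha j (p i)
  simp only [Dq]
  rcases le_or_gt 0 (a i (p i) + a j (p j) - a i (p j) - a j (p i)) with h | h
  · nlinarith
  · nlinarith

lemma flip_sum_sq (a : Fin n → Fin n → ℝ) (f : ℝ → ℝ) (i j : Fin n) :
    ∑ p : Equiv.Perm (Fin n), (Dq a p i j)^2 * f (Xf a (p * Equiv.swap i j))
      = ∑ p : Equiv.Perm (Fin n), (Dq a p i j)^2 * f (Xf a p) := by
  have h := perm_reindex (fun p => (Dq a p i j)^2 * f (Xf a (p * Equiv.swap i j))) (Equiv.swap i j)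
  simp only [mul_assoc, Equiv.swap_mul_self, mul_one, Dq_swap, neg_sq] at h
  exact h.symm

lemma sq_half_collapse (a : Fin n → Fin n → ℝ) (θ : ℝ) :
    ∑ p : Equiv.Perm (Fin n), ∑ i, ∑ j,
        θ * ((Dq a p i j)^2 * (Real.exp (θ * Xf a p)
            + Real.exp (θ * Xf a (p * Equiv.swap i j))) / 2)
      = θ * ∑ p : Equiv.Perm (Fin n), ∑ i, ∑ j,
          (Dq a p i j)^2 * Real.exp (θ * Xf a p) := by
  have key : ∑ p : Equiv.Perm (Fin n), ∑ i, ∑ j,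
        (Dq a p i j)^2 * Real.exp (θ * Xf a (p * Equiv.swap i j))
      = ∑ p : Equiv.Perm (Fin n), ∑ i, ∑ j,
        (Dq a p i j)^2 * Real.exp (θ * Xf a p) := by
    rw [triple_comm, triple_comm (fun p i j => (Dq a p i j)^2 * Real.exp (θ * Xf a p))]
    refine Finset.sum_congr rfl fun i _ => Finset.sum_congr rfl fun j _ => ?_
    exact flip_sum_sq a (fun x => Real.exp (θ * x)) i j
  calc ∑ p : Equiv.Perm (Fin n), ∑ i, ∑ j,
        θ * ((Dq a p i j)^2 * (Real.exp (θ * Xf a p)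
            + Real.exp (θ * Xf a (p * Equiv.swap i j))) / 2)
      = θ/2 * ((∑ p : Equiv.Perm (Fin n), ∑ i, ∑ j,
            (Dq a p i j)^2 * Real.exp (θ * Xf a p))
          + ∑ p : Equiv.Perm (Fin n), ∑ i, ∑ j,
            (Dq a p i j)^2 * Real.exp (θ * Xf a (p * Equiv.swap i j))) := by
        simp only [Finset.mul_sum, ← Finset.sum_add_distrib]
        refine Finset.sum_congr rfl fun p _ => Finset.sum_congr rfl fun i _ =>
          Finset.sum_congr rfl fun j _ => ?_
        ring
    _ = θ * ∑ p : Equiv.Perm (Fin n), ∑ i, ∑ j,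
          (Dq a p i j)^2 * Real.exp (θ * Xf a p) := by
        rw [key]; ring

lemma inner_sq_bound (a : Fin n → Fin n → ℝ) (ha : ∀ i j, a i j ∈ Set.Icc (0:ℝ) 1)
    (p : Equiv.Perm (Fin n)) (θ : ℝ) :
    ∑ i, ∑ j, (Dq a p i j)^2 * Real.exp (θ * Xf a p)
      ≤ 2 * (2 * n * Xf a p + 2 * (∑ i, ∑ j, a i j)) * Real.exp (θ * Xf a p) := by
  have h1 : ∑ i, ∑ j, (Dq a p i j)^2 * Real.exp (θ * Xf a p)
      ≤ ∑ i, ∑ j, (2 * (a i (p i) + a j (p j) + a i (p j) + a j (p i)))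
          * Real.exp (θ * Xf a p) := by
    refine Finset.sum_le_sum fun i _ => Finset.sum_le_sum fun j _ => ?_
    exact mul_le_mul_of_nonneg_right (Dq_sq_le a ha p i j) (Real.exp_pos _).le
  have hre : ∑ i, ∑ j, (2 * (a i (p i) + a j (p j) + a i (p j) + a j (p i)))
        * Real.exp (θ * Xf a p)
      = (∑ i, ∑ j, (a i (p i) + a j (p j) + a i (p j) + a j (p i)))
        * (2 * Real.exp (θ * Xf a p)) := by
    rw [Finset.sum_mul]
    refine Finset.sum_congr rfl fun i _ => ?_
    rw [Finset.sum_mul]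
    exact Finset.sum_congr rfl fun j _ => by ring
  rw [hre, sum_fourpos] at h1
  calc ∑ i, ∑ j, (Dq a p i j)^2 * Real.exp (θ * Xf a p) ≤ _ := h1
    _ = 2 * (2 * n * Xf a p + 2 * (∑ i, ∑ j, a i j)) * Real.exp (θ * Xf a p) := by ring
lemma masterU (a : Fin n → Fin n → ℝ) (ha : ∀ i j, a i j ∈ Set.Icc (0:ℝ) 1)
    (θ : ℝ) (hθ : 0 ≤ θ) :
    ∑ p : Equiv.Perm (Fin n), (2 * n * Xf a p - 2 * (∑ i, ∑ j, a i j))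
        * Real.exp (θ * Xf a p)
      ≤ θ * ∑ p : Equiv.Perm (Fin n), (2 * n * Xf a p + 2 * (∑ i, ∑ j, a i j))
        * Real.exp (θ * Xf a p) := by
  have hid := master_id a (fun x => Real.exp (θ * x))
  have step1 : ∑ p : Equiv.Perm (Fin n), ∑ i, ∑ j,
        Dq a p i j * (Real.exp (θ * Xf a p) - Real.exp (θ * Xf a (p * Equiv.swap i j)))
      ≤ ∑ p : Equiv.Perm (Fin n), ∑ i, ∑ j,
        θ * ((Dq a p i j)^2 * (Real.exp (θ * Xf a p)
            + Real.exp (θ * Xf a (p * Equiv.swap i j))) / 2) := by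
    refine Finset.sum_le_sum fun p _ => Finset.sum_le_sum fun i _ =>
      Finset.sum_le_sum fun j _ => ?_
    have hthis := exp_pair_thetaU θ (Xf a p) (Xf a (p * Equiv.swap i j)) hθ
    have hd : Xf a p - Xf a (p * Equiv.swap i j) = Dq a p i j := by rw [X_swap]; ring
    rw [hd] at hthis
    exact hthis
  have step2 := sq_half_collapse a θ
  have step3 : θ * (∑ p : Equiv.Perm (Fin n), ∑ i, ∑ j,
        (Dq a p i j)^2 * Real.exp (θ * Xf a p))
      ≤ θ * ∑ p : Equiv.Perm (Fin n), 2 * (2 * n * Xf a p + 2 * (∑ i, ∑ j, a i j))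
        * Real.exp (θ * Xf a p) :=
    mul_le_mul_of_nonneg_left (Finset.sum_le_sum fun p _ => inner_sq_bound a ha p θ) hθ
  have step4 : ∑ p : Equiv.Perm (Fin n), 2 * (2 * n * Xf a p + 2 * (∑ i, ∑ j, a i j))
        * Real.exp (θ * Xf a p)
      = 2 * ∑ p : Equiv.Perm (Fin n), (2 * n * Xf a p + 2 * (∑ i, ∑ j, a i j))
        * Real.exp (θ * Xf a p) := by
    rw [Finset.mul_sum univ (fun p : Equiv.Perm (Fin n) =>
      (2 * n * Xf a p + 2 * (∑ i, ∑ j, a i j)) * Real.exp (θ * Xf a p)) 2]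
    exact Finset.sum_congr rfl fun p _ => by ring
  rw [step4] at step3
  rw [step2] at step1
  linarith

lemma masterL (a : Fin n → Fin n → ℝ) (ha : ∀ i j, a i j ∈ Set.Icc (0:ℝ) 1)
    (θ : ℝ) (hθ : θ ≤ 0) :
    θ * ∑ p : Equiv.Perm (Fin n), (2 * n * Xf a p + 2 * (∑ i, ∑ j, a i j))
        * Real.exp (θ * Xf a p)
      ≤ ∑ p : Equiv.Perm (Fin n), (2 * n * Xf a p - 2 * (∑ i, ∑ j, a i j))
        * Real.exp (θ * Xf a p) := by
  have hid := master_id a (fun x => Real.exp (θ * x))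
  have step1 : ∑ p : Equiv.Perm (Fin n), ∑ i, ∑ j,
        θ * ((Dq a p i j)^2 * (Real.exp (θ * Xf a p)
            + Real.exp (θ * Xf a (p * Equiv.swap i j))) / 2)
      ≤ ∑ p : Equiv.Perm (Fin n), ∑ i, ∑ j,
        Dq a p i j * (Real.exp (θ * Xf a p) - Real.exp (θ * Xf a (p * Equiv.swap i j))) := by
    refine Finset.sum_le_sum fun p _ => Finset.sum_le_sum fun i _ =>
      Finset.sum_le_sum fun j _ => ?_
    have hthis := exp_pair_thetaL θ (Xf a p) (Xf a (p * Equiv.swap i j)) hθ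
    have hd : Xf a p - Xf a (p * Equiv.swap i j) = Dq a p i j := by rw [X_swap]; ring
    rw [hd] at hthis
    exact hthis
  have step2 := sq_half_collapse a θ
  have step3 : θ * (∑ p : Equiv.Perm (Fin n), 2 * (2 * n * Xf a p + 2 * (∑ i, ∑ j, a i j))
        * Real.exp (θ * Xf a p))
      ≤ θ * ∑ p : Equiv.Perm (Fin n), ∑ i, ∑ j,
        (Dq a p i j)^2 * Real.exp (θ * Xf a p) :=
    mul_le_mul_of_nonpos_left (Finset.sum_le_sum fun p _ => inner_sq_bound a ha p θ) hθ
  have step4 : ∑ p : Equiv.Perm (Fin n), 2 * (2 * n * Xf a p + 2 * (∑ i, ∑ j, a i j))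
        * Real.exp (θ * Xf a p)
      = 2 * ∑ p : Equiv.Perm (Fin n), (2 * n * Xf a p + 2 * (∑ i, ∑ j, a i j))
        * Real.exp (θ * Xf a p) := by
    rw [Finset.mul_sum univ (fun p : Equiv.Perm (Fin n) =>
      (2 * n * Xf a p + 2 * (∑ i, ∑ j, a i j)) * Real.exp (θ * Xf a p)) 2]
    exact Finset.sum_congr rfl fun p _ => by ring
  rw [step4] at step3
  rw [step2] at step1
  linarith




lemma m_hasDeriv (c : Equiv.Perm (Fin n) → ℝ) (θ : ℝ) :
    HasDerivAt (fun θ : ℝ => ∑ p : Equiv.Perm (Fin n), Real.exp (θ * c p))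
      (∑ p : Equiv.Perm (Fin n), c p * Real.exp (θ * c p)) θ := by
  apply HasDerivAt.fun_sum
  intro p _
  have h := (Real.hasDerivAt_exp (θ * c p)).comp θ (hasDerivAt_mul_const (c p))
  simpa [mul_comm, Function.comp_def] using h

lemma m_pos (c : Equiv.Perm (Fin n) → ℝ) (θ : ℝ) :
    0 < ∑ p : Equiv.Perm (Fin n), Real.exp (θ * c p) :=
  Finset.sum_pos (fun p _ => Real.exp_pos _) Finset.univ_nonempty

lemma m_zero (c : Equiv.Perm (Fin n) → ℝ) :
    ∑ p : Equiv.Perm (Fin n), Real.exp (0 * c p) = (n.factorial : ℝ) := by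
  simp [Finset.card_univ, Fintype.card_perm]

lemma g_hasDeriv (μ : ℝ) (θ : ℝ) (hθ : θ ≠ 1) :
    HasDerivAt (fun θ : ℝ => μ * θ / (1 - θ)) (μ / (1 - θ)^2) θ := by
  have h1 : HasDerivAt (fun θ : ℝ => μ * θ) μ θ := by
    simpa using (hasDerivAt_id θ).const_mul μ
  have h2 : HasDerivAt (fun θ : ℝ => 1 - θ) (-1) θ := by
    simpa using (hasDerivAt_id θ).const_sub 1
  have h3 := h1.fun_div h2 (sub_ne_zero.mpr (Ne.symm hθ))
  refine h3.congr_deriv ?_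
  congr 1
  ring

lemma expand_sub (a : Fin n → Fin n → ℝ) (S θ : ℝ) :
    ∑ p : Equiv.Perm (Fin n), (2 * n * Xf a p - 2 * S) * Real.exp (θ * Xf a p)
      = 2 * n * (∑ p : Equiv.Perm (Fin n), Xf a p * Real.exp (θ * Xf a p))
        - 2 * S * (∑ p : Equiv.Perm (Fin n), Real.exp (θ * Xf a p)) := by
  rw [Finset.mul_sum, Finset.mul_sum, ← Finset.sum_sub_distrib]
  exact Finset.sum_congr rfl fun p _ => by ring

lemma expand_add (a : Fin n → Fin n → ℝ) (S θ : ℝ) :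
    ∑ p : Equiv.Perm (Fin n), (2 * n * Xf a p + 2 * S) * Real.exp (θ * Xf a p)
      = 2 * n * (∑ p : Equiv.Perm (Fin n), Xf a p * Real.exp (θ * Xf a p))
        + 2 * S * (∑ p : Equiv.Perm (Fin n), Real.exp (θ * Xf a p)) := by
  rw [Finset.mul_sum, Finset.mul_sum, ← Finset.sum_add_distrib]
  exact Finset.sum_congr rfl fun p _ => by ring

lemma star_ineq (a : Fin n → Fin n → ℝ) (ha : ∀ i j, a i j ∈ Set.Icc (0:ℝ) 1)
    (hn : 0 < n) (μ : ℝ) (hS : (∑ i, ∑ j, a i j) = n * μ) (θ : ℝ) (hθ : 0 ≤ θ) :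
    (∑ p : Equiv.Perm (Fin n), Xf a p * Real.exp (θ * Xf a p))
        - μ * (∑ p : Equiv.Perm (Fin n), Real.exp (θ * Xf a p))
      ≤ θ * ((∑ p : Equiv.Perm (Fin n), Xf a p * Real.exp (θ * Xf a p))
        + μ * (∑ p : Equiv.Perm (Fin n), Real.exp (θ * Xf a p))) := by
  have A := masterU a ha θ hθ
  rw [expand_sub, expand_add, hS] at A
  set M1 := ∑ p : Equiv.Perm (Fin n), Xf a p * Real.exp (θ * Xf a p)
  set m := ∑ p : Equiv.Perm (Fin n), Real.exp (θ * Xf a p)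
  have hn' : (0:ℝ) < n := by exact_mod_cast hn
  have hA' : (2*(n:ℝ)) * (M1 - μ * m) ≤ (2*(n:ℝ)) * (θ*(M1 + μ*m)) := by nlinarith [A]
  exact le_of_mul_le_mul_left hA' (by linarith)

lemma star_ineqL (a : Fin n → Fin n → ℝ) (ha : ∀ i j, a i j ∈ Set.Icc (0:ℝ) 1)
    (hn : 0 < n) (μ : ℝ) (hS : (∑ i, ∑ j, a i j) = n * μ) (θ : ℝ) (hθ : θ ≤ 0) :
    θ * ((∑ p : Equiv.Perm (Fin n), Xf a p * Real.exp (θ * Xf a p))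
        + μ * (∑ p : Equiv.Perm (Fin n), Real.exp (θ * Xf a p)))
      ≤ (∑ p : Equiv.Perm (Fin n), Xf a p * Real.exp (θ * Xf a p))
        - μ * (∑ p : Equiv.Perm (Fin n), Real.exp (θ * Xf a p)) := by
  have A := masterL a ha θ hθ
  rw [expand_sub, expand_add, hS] at A
  set M1 := ∑ p : Equiv.Perm (Fin n), Xf a p * Real.exp (θ * Xf a p)
  set m := ∑ p : Equiv.Perm (Fin n), Real.exp (θ * Xf a p)
  have hn' : (0:ℝ) < n := by exact_mod_cast hn
  have hA' : (2*(n:ℝ)) * (θ*(M1 + μ*m)) ≤ (2*(n:ℝ)) * (M1 - μ * m) := by nlinarith [A]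
  exact le_of_mul_le_mul_left hA' (by linarith)

lemma tail_up (a : Fin n → Fin n → ℝ) (ha : ∀ i j, a i j ∈ Set.Icc (0:ℝ) 1)
    (hn : 0 < n) (μ t : ℝ) (hμ : 0 < μ) (ht : 0 < t)
    (hS : (∑ i, ∑ j, a i j) = n * μ) :
    ((Finset.univ.filter (fun p : Equiv.Perm (Fin n) => μ + t ≤ Xf a p)).card : ℝ)
      ≤ (n.factorial : ℝ) * Real.exp (-t^2/(4*μ+2*t)) := by
  set c : Equiv.Perm (Fin n) → ℝ := Xf a with hc
  set m : ℝ → ℝ := fun θ => ∑ p : Equiv.Perm (Fin n), Real.exp (θ * c p) with hmdef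
  set M1 : ℝ → ℝ := fun θ => ∑ p : Equiv.Perm (Fin n), c p * Real.exp (θ * c p) with hM1def
  have key : ∀ θ : ℝ, 0 ≤ θ → θ < 1 → M1 θ ≤ μ / (1-θ)^2 * m θ := by
    intro θ hθ0 hθ1
    have hstar := star_ineq a ha hn μ hS θ hθ0
    have hmpos : 0 < m θ := m_pos c θ
    have h1θ : 0 < 1 - θ := by linarith
    have e1 : M1 θ * (1-θ) ≤ μ*(1+θ)*(m θ) := by
      simp only [hM1def, hmdef] at *
      nlinarith [hstar]
    have e3 : M1 θ * (1-θ)^2 ≤ μ * m θ := by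
      nlinarith [mul_le_mul_of_nonneg_right e1 h1θ.le,
        mul_nonneg (mul_nonneg hμ.le hmpos.le) (sq_nonneg θ)]
    have hrw : μ / (1-θ)^2 * m θ = μ * m θ / (1-θ)^2 := by ring
    rw [hrw, le_div_iff₀ (by positivity)]
    exact e3
  set b : ℝ := t / (2*μ + t) with hbdef
  have hb0 : 0 < b := div_pos ht (by linarith)
  have hb1 : b < 1 := by
    rw [hbdef, div_lt_one (by linarith)]; linarith
  set Φ : ℝ → ℝ := fun θ => m θ * Real.exp (-(μ*θ/(1-θ))) with hΦdef
  have hΦd : ∀ θ : ℝ, θ < 1 →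
      HasDerivAt Φ ((M1 θ - μ/(1-θ)^2 * m θ) * Real.exp (-(μ*θ/(1-θ)))) θ := by
    intro θ hθ1
    have hg := (g_hasDeriv μ θ (ne_of_lt hθ1)).neg
    have hexp := (Real.hasDerivAt_exp (-(μ*θ/(1-θ)))).comp θ hg
    have hmul := (m_hasDeriv c θ).mul hexp
    have heq : (M1 θ - μ/(1-θ)^2 * m θ) * Real.exp (-(μ*θ/(1-θ)))
        = M1 θ * Real.exp (-(μ*θ/(1-θ)))
          + m θ * (Real.exp (-(μ*θ/(1-θ))) * -(μ/(1-θ)^2)) := by ring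
    rw [heq]
    exact hmul
  have hanti : AntitoneOn Φ (Set.Icc 0 b) := by
    apply antitoneOn_of_deriv_nonpos (convex_Icc _ _)
    · intro x hx
      exact (hΦd x (lt_of_le_of_lt hx.2 hb1)).continuousAt.continuousWithinAt
    · intro x hx
      rw [interior_Icc] at hx
      exact (hΦd x (lt_trans hx.2 hb1)).differentiableAt.differentiableWithinAt
    · intro x hx
      rw [interior_Icc] at hx
      rw [(hΦd x (lt_trans hx.2 hb1)).deriv]
      have hkey := key x hx.1.le (lt_trans hx.2 hb1)
      have hle : M1 x - μ/(1-x)^2 * m x ≤ 0 := by linarith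
      exact mul_nonpos_of_nonpos_of_nonneg hle (Real.exp_pos _).le
  have hΦ0 : Φ 0 = (n.factorial : ℝ) := by
    simp [hΦdef, hmdef, Finset.card_univ, Fintype.card_perm]
  have hΦb : Φ b ≤ (n.factorial : ℝ) := by
    rw [← hΦ0]
    exact hanti (Set.left_mem_Icc.2 hb0.le) ⟨hb0.le, le_refl b⟩ hb0.le
  have hmb : m b ≤ (n.factorial : ℝ) * Real.exp (μ*b/(1-b)) := by
    have h := mul_le_mul_of_nonneg_right hΦb (Real.exp_pos (μ*b/(1-b))).le
    simp only [hΦdef] at h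
    rwa [mul_assoc, ← Real.exp_add, neg_add_cancel, Real.exp_zero, mul_one] at h
  -- Chernoff
  have hcount : ((Finset.univ.filter (fun p : Equiv.Perm (Fin n) => μ + t ≤ Xf a p)).card : ℝ)
      * Real.exp (b*(μ+t)) ≤ m b := by
    calc ((Finset.univ.filter (fun p : Equiv.Perm (Fin n) => μ + t ≤ Xf a p)).card : ℝ)
        * Real.exp (b*(μ+t))
        = ∑ _p ∈ Finset.univ.filter (fun p : Equiv.Perm (Fin n) => μ + t ≤ Xf a p),
            Real.exp (b*(μ+t)) := by rw [Finset.sum_const, nsmul_eq_mul]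
      _ ≤ ∑ p ∈ Finset.univ.filter (fun p : Equiv.Perm (Fin n) => μ + t ≤ Xf a p),
            Real.exp (b * c p) := by
          refine Finset.sum_le_sum fun p hp => ?_
          have hp' := (Finset.mem_filter.1 hp).2
          exact Real.exp_le_exp.2 (mul_le_mul_of_nonneg_left hp' hb0.le)
      _ ≤ ∑ p : Equiv.Perm (Fin n), Real.exp (b * c p) :=
          Finset.sum_le_sum_of_subset_of_nonneg (Finset.filter_subset _ _)
            (fun p _ _ => (Real.exp_pos _).le)
  have h1 : ((Finset.univ.filter (fun p : Equiv.Perm (Fin n) => μ + t ≤ Xf a p)).card : ℝ)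
      ≤ m b * Real.exp (-(b*(μ+t))) := by
    have h := mul_le_mul_of_nonneg_right hcount (Real.exp_pos (-(b*(μ+t)))).le
    rwa [mul_assoc, ← Real.exp_add, add_neg_cancel, Real.exp_zero, mul_one] at h
  have h2 : m b * Real.exp (-(b*(μ+t)))
      ≤ (n.factorial : ℝ) * Real.exp (μ*b/(1-b)) * Real.exp (-(b*(μ+t))) :=
    mul_le_mul_of_nonneg_right hmb (Real.exp_pos _).le
  have hexpo : μ*b/(1-b) + -(b*(μ+t)) = -t^2/(4*μ+2*t) := by
    rw [hbdef]
    have h2μt : (2*μ + t) ≠ 0 := by positivity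
    have h1b : 1 - t/(2*μ+t) = 2*μ/(2*μ+t) := by field_simp; ring
    rw [h1b]
    field_simp
    ring
  calc ((Finset.univ.filter (fun p : Equiv.Perm (Fin n) => μ + t ≤ Xf a p)).card : ℝ)
      ≤ m b * Real.exp (-(b*(μ+t))) := h1
    _ ≤ (n.factorial : ℝ) * Real.exp (μ*b/(1-b)) * Real.exp (-(b*(μ+t))) := h2
    _ = (n.factorial : ℝ) * Real.exp (-t^2/(4*μ+2*t)) := by
        rw [mul_assoc, ← Real.exp_add, hexpo]

lemma tail_lo (a : Fin n → Fin n → ℝ) (ha : ∀ i j, a i j ∈ Set.Icc (0:ℝ) 1)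
    (hn : 0 < n) (μ t : ℝ) (hμ : 0 < μ) (ht : 0 < t)
    (hS : (∑ i, ∑ j, a i j) = n * μ) :
    ((Finset.univ.filter (fun p : Equiv.Perm (Fin n) => Xf a p ≤ μ - t)).card : ℝ)
      ≤ (n.factorial : ℝ) * Real.exp (-t^2/(4*μ+2*t)) := by
  set c : Equiv.Perm (Fin n) → ℝ := Xf a with hc
  set m : ℝ → ℝ := fun θ => ∑ p : Equiv.Perm (Fin n), Real.exp (θ * c p) with hmdef
  set M1 : ℝ → ℝ := fun θ => ∑ p : Equiv.Perm (Fin n), c p * Real.exp (θ * c p) with hM1def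
  have key : ∀ θ : ℝ, θ ≤ 0 → μ*(1+2*θ) * m θ ≤ M1 θ := by
    intro θ hθ0
    have hstar := star_ineqL a ha hn μ hS θ hθ0
    have hmpos : 0 < m θ := m_pos c θ
    have h1θ : 0 < 1 - θ := by linarith
    have e1 : μ*(1+θ)*(m θ) ≤ M1 θ * (1-θ) := by
      simp only [hM1def, hmdef] at *
      nlinarith [hstar]
    have e2 : (μ*(1+2*θ) * m θ) * (1-θ) ≤ M1 θ * (1-θ) := by
      nlinarith [e1, mul_nonneg (mul_nonneg hμ.le hmpos.le) (sq_nonneg θ)]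
    exact le_of_mul_le_mul_right e2 h1θ
  set b : ℝ := -(t / (2*μ)) with hbdef
  have hb0 : b < 0 := neg_neg_iff_pos.2 (div_pos ht (by linarith))
  set Ψ : ℝ → ℝ := fun θ => m θ * Real.exp (-(μ*θ + μ*θ^2)) with hΨdef
  have hΨd : ∀ θ : ℝ,
      HasDerivAt Ψ ((M1 θ - (μ + 2*μ*θ) * m θ) * Real.exp (-(μ*θ + μ*θ^2))) θ := by
    intro θ
    have hq : HasDerivAt (fun θ : ℝ => -(μ*θ + μ*θ^2)) (-(μ + 2*μ*θ)) θ := by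
      have h1 : HasDerivAt (fun θ : ℝ => μ*θ) μ θ := by
        simpa using (hasDerivAt_id θ).const_mul μ
      have h2 : HasDerivAt (fun θ : ℝ => μ*θ^2) (μ*(2*θ)) θ := by
        simpa using (hasDerivAt_pow 2 θ).const_mul μ
      have := (h1.fun_add h2).fun_neg
      refine this.congr_deriv ?_
      ring
    have hexp := (Real.hasDerivAt_exp (-(μ*θ + μ*θ^2))).comp θ hq
    have hmul := (m_hasDeriv c θ).mul hexp
    have heq : (M1 θ - (μ + 2*μ*θ) * m θ) * Real.exp (-(μ*θ + μ*θ^2))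
        = M1 θ * Real.exp (-(μ*θ + μ*θ^2))
          + m θ * (Real.exp (-(μ*θ + μ*θ^2)) * -(μ + 2*μ*θ)) := by ring
    rw [heq]
    exact hmul
  have hmono : MonotoneOn Ψ (Set.Icc b 0) := by
    apply monotoneOn_of_deriv_nonneg (convex_Icc _ _)
    · intro x _
      exact (hΨd x).continuousAt.continuousWithinAt
    · intro x _
      exact (hΨd x).differentiableAt.differentiableWithinAt
    · intro x hx
      rw [interior_Icc] at hx
      rw [(hΨd x).deriv]
      have hkey := key x hx.2.le
      have hle : 0 ≤ M1 x - (μ + 2*μ*x) * m x := by nlinarith [hkey]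
      exact mul_nonneg hle (Real.exp_pos _).le
  have hΨ0 : Ψ 0 = (n.factorial : ℝ) := by
    simp [hΨdef, hmdef, Finset.card_univ, Fintype.card_perm]
  have hΨb : Ψ b ≤ (n.factorial : ℝ) := by
    rw [← hΨ0]
    exact hmono (Set.left_mem_Icc.2 hb0.le) (Set.right_mem_Icc.2 hb0.le) hb0.le
  have hmb : m b ≤ (n.factorial : ℝ) * Real.exp (μ*b + μ*b^2) := by
    have h := mul_le_mul_of_nonneg_right hΨb (Real.exp_pos (μ*b + μ*b^2)).le
    simp only [hΨdef] at h
    rwa [mul_assoc, ← Real.exp_add, neg_add_cancel, Real.exp_zero, mul_one] at h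
  have hcount : ((Finset.univ.filter (fun p : Equiv.Perm (Fin n) => Xf a p ≤ μ - t)).card : ℝ)
      * Real.exp (b*(μ-t)) ≤ m b := by
    calc ((Finset.univ.filter (fun p : Equiv.Perm (Fin n) => Xf a p ≤ μ - t)).card : ℝ)
        * Real.exp (b*(μ-t))
        = ∑ _p ∈ Finset.univ.filter (fun p : Equiv.Perm (Fin n) => Xf a p ≤ μ - t),
            Real.exp (b*(μ-t)) := by rw [Finset.sum_const, nsmul_eq_mul]
      _ ≤ ∑ p ∈ Finset.univ.filter (fun p : Equiv.Perm (Fin n) => Xf a p ≤ μ - t),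
            Real.exp (b * c p) := by
          refine Finset.sum_le_sum fun p hp => ?_
          have hp' := (Finset.mem_filter.1 hp).2
          exact Real.exp_le_exp.2 (mul_le_mul_of_nonpos_left hp' hb0.le)
      _ ≤ ∑ p : Equiv.Perm (Fin n), Real.exp (b * c p) :=
          Finset.sum_le_sum_of_subset_of_nonneg (Finset.filter_subset _ _)
            (fun p _ _ => (Real.exp_pos _).le)
  have h1 : ((Finset.univ.filter (fun p : Equiv.Perm (Fin n) => Xf a p ≤ μ - t)).card : ℝ)
      ≤ m b * Real.exp (-(b*(μ-t))) := by
    have h := mul_le_mul_of_nonneg_right hcount (Real.exp_pos (-(b*(μ-t)))).le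
    rwa [mul_assoc, ← Real.exp_add, add_neg_cancel, Real.exp_zero, mul_one] at h
  have h2 : m b * Real.exp (-(b*(μ-t)))
      ≤ (n.factorial : ℝ) * Real.exp (μ*b + μ*b^2) * Real.exp (-(b*(μ-t))) :=
    mul_le_mul_of_nonneg_right hmb (Real.exp_pos _).le
  have hexpo : μ*b + μ*b^2 + -(b*(μ-t)) = -t^2/(4*μ) := by
    rw [hbdef]
    field_simp
    ring
  have hfinal : (n.factorial : ℝ) * Real.exp (-t^2/(4*μ))
      ≤ (n.factorial : ℝ) * Real.exp (-t^2/(4*μ+2*t)) := by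
    have hdiv : t^2/(4*μ+2*t) ≤ t^2/(4*μ) := by gcongr <;> linarith
    have := Real.exp_le_exp.2 (neg_le_neg hdiv)
    rw [neg_div, neg_div] at *
    exact mul_le_mul_of_nonneg_left (by simpa using this) (by positivity)
  calc ((Finset.univ.filter (fun p : Equiv.Perm (Fin n) => Xf a p ≤ μ - t)).card : ℝ)
      ≤ m b * Real.exp (-(b*(μ-t))) := h1
    _ ≤ (n.factorial : ℝ) * Real.exp (μ*b + μ*b^2) * Real.exp (-(b*(μ-t))) := h2
    _ = (n.factorial : ℝ) * Real.exp (-t^2/(4*μ)) := by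
        rw [mul_assoc, ← Real.exp_add, hexpo]
    _ ≤ (n.factorial : ℝ) * Real.exp (-t^2/(4*μ+2*t)) := hfinal

end HSBAux

/-- **Proposition 1.1 (generalized matching problem).**
Let `{a i j} ⊆ [0,1]`, let `π` be a uniformly random permutation of `{1,…,n}`, and let
`X = ∑ i, a i (π i)`. Then `P(|X - E X| ≥ t) ≤ 2 exp(-t²/(4 E X + 2t))` for all `t ≥ 0`.
Probabilities and expectations under the uniform measure on `S_n` are expressed as
normalized counts/sums over all `n!` permutations. -/
theorem hoeffding_statistic_bernstein_bound
    (n : ℕ) (a : Fin n → Fin n → ℝ) (ha : ∀ i j, a i j ∈ Set.Icc (0 : ℝ) 1)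
    (X : Equiv.Perm (Fin n) → ℝ) (hX : ∀ π, X π = ∑ i, a i (π i))
    (EX : ℝ) (hEX : EX = (∑ π : Equiv.Perm (Fin n), X π) / (Nat.factorial n))
    (t : ℝ) (ht : 0 ≤ t) :
    ((Finset.univ.filter (fun π : Equiv.Perm (Fin n) => t ≤ |X π - EX|)).card : ℝ)
        / (Nat.factorial n)
      ≤ 2 * Real.exp (-t ^ 2 / (4 * EX + 2 * t)) := by
  have hXfun : X = Xf a := funext fun p => hX p
  subst hXfun
  have hN : (0:ℝ) < (n.factorial : ℝ) := by exact_mod_cast n.factorial_pos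
  rcases eq_or_lt_of_le ht with rfl | ht'
  · -- t = 0
    have hRHS : 2 * Real.exp (-(0:ℝ) ^ 2 / (4 * EX + 2 * 0)) = 2 := by norm_num
    rw [hRHS]
    have hcard : ((Finset.univ.filter
          (fun p : Equiv.Perm (Fin n) => (0:ℝ) ≤ |Xf a p - EX|)).card : ℝ)
        ≤ (n.factorial : ℝ) := by
      have := Finset.card_le_card (Finset.filter_subset
        (fun p : Equiv.Perm (Fin n) => (0:ℝ) ≤ |Xf a p - EX|) Finset.univ)
      rw [Finset.card_univ, Fintype.card_perm, Fintype.card_fin] at this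
      exact_mod_cast this
    calc ((Finset.univ.filter
          (fun p : Equiv.Perm (Fin n) => (0:ℝ) ≤ |Xf a p - EX|)).card : ℝ) / (n.factorial : ℝ)
        ≤ (n.factorial : ℝ) / (n.factorial : ℝ) := by gcongr
        _ ≤ 2 := by rw [div_self (ne_of_gt hN)]; norm_num
  · -- t > 0
    have hXnn : ∀ p : Equiv.Perm (Fin n), 0 ≤ Xf a p := fun p =>
      Finset.sum_nonneg fun i _ => (ha i (p i)).1
    have hEX0 : 0 ≤ EX := by
      rw [hEX]
      exact div_nonneg (Finset.sum_nonneg fun p _ => hXnn p) hN.le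
    rcases eq_or_lt_of_le hEX0 with hEX0' | hEXpos
    · -- EX = 0 : all X p = 0, filter empty
      have hsum0 : ∑ p : Equiv.Perm (Fin n), Xf a p = 0 := by
        have := hEX.symm
        rw [← hEX0'] at this
        field_simp at this
        linarith [this]
      have hall : ∀ p : Equiv.Perm (Fin n), Xf a p = 0 := by
        intro p
        have := (Finset.sum_eq_zero_iff_of_nonneg fun q _ => hXnn q).1 hsum0
        exact this p (Finset.mem_univ p)
      have hempty : (Finset.univ.filter
          (fun p : Equiv.Perm (Fin n) => t ≤ |Xf a p - EX|)) = ∅ := by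
        apply Finset.filter_eq_empty_iff.2
        intro p _
        rw [hall p, ← hEX0']
        simp
        linarith
      rw [hempty]
      simp
      positivity
    · -- EX > 0
      have hn : 0 < n := by
        rcases Nat.eq_zero_or_pos n with rfl | h
        · exfalso
          have : ∀ p : Equiv.Perm (Fin 0), Xf a p = 0 := fun p => by
            simp [Xf]
          rw [hEX] at hEXpos
          simp [this] at hEXpos
        · exact h
      have hnR : (0:ℝ) < n := by exact_mod_cast hn
      have hsum : ∑ p : Equiv.Perm (Fin n), Xf a p = EX * (n.factorial : ℝ) := by
        rw [hEX]; field_simp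
      have hS : (∑ i, ∑ j, a i j) = n * EX := by
        have h := sum_X_eq a
        rw [hsum] at h
        apply mul_left_cancel₀ (ne_of_gt hN)
        linear_combination -h
      have hU := tail_up a ha hn EX t hEXpos ht' hS
      have hL := tail_lo a ha hn EX t hEXpos ht' hS
      have hsub : (Finset.univ.filter (fun p : Equiv.Perm (Fin n) => t ≤ |Xf a p - EX|))
          ⊆ (Finset.univ.filter (fun p : Equiv.Perm (Fin n) => EX + t ≤ Xf a p))
            ∪ (Finset.univ.filter (fun p : Equiv.Perm (Fin n) => Xf a p ≤ EX - t)) := by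
        intro p hp
        have hp' := (Finset.mem_filter.1 hp).2
        rcases le_abs.1 hp' with h | h
        · exact Finset.mem_union_left _ (Finset.mem_filter.2 ⟨Finset.mem_univ p, by linarith⟩)
        · exact Finset.mem_union_right _ (Finset.mem_filter.2 ⟨Finset.mem_univ p, by linarith⟩)
      have hcard : ((Finset.univ.filter
            (fun p : Equiv.Perm (Fin n) => t ≤ |Xf a p - EX|)).card : ℝ)
          ≤ ((Finset.univ.filter (fun p : Equiv.Perm (Fin n) => EX + t ≤ Xf a p)).card : ℝ)
            + ((Finset.univ.filter (fun p : Equiv.Perm (Fin n) => Xf a p ≤ EX - t)).card : ℝ) := by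
        have h1 := Finset.card_le_card hsub
        have h2 := Finset.card_union_le
          (Finset.univ.filter (fun p : Equiv.Perm (Fin n) => EX + t ≤ Xf a p))
          (Finset.univ.filter (fun p : Equiv.Perm (Fin n) => Xf a p ≤ EX - t))
        exact_mod_cast le_trans h1 h2
      have htotal : ((Finset.univ.filter
            (fun p : Equiv.Perm (Fin n) => t ≤ |Xf a p - EX|)).card : ℝ)
          ≤ 2 * ((n.factorial : ℝ) * Real.exp (-t^2/(4*EX+2*t))) := by linarith
      rw [div_le_iff₀ hN]
      calc ((Finset.univ.filter
            (fun p : Equiv.Perm (Fin n) => t ≤ |Xf a p - EX|)).card : ℝ)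
          ≤ 2 * ((n.factorial : ℝ) * Real.exp (-t^2/(4*EX+2*t))) := htotal
        _ = 2 * Real.exp (-t^2/(4*EX+2*t)) * (n.factorial : ℝ) := by ring
end

section
/- Let {a_{ij}}_{1 ≤ i,j ≤ n} be an arbitrary collection of real numbers. Let π be a uniformly random permutation of {1, …, n}, and let X = Σ_{i=1}^n a_{i π(i)}. Define Δ := (1/(4n)) Σ_{i,j=1}^n (a_{i π(i)} + a_{j π(j)} - a_{i π(j)} - a_{j π(i)})². Then for every positive integer k, E((X - E(X))^{2k}) ≤ (2k-1)^k E(Δ^k). -/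
open Finset

set_option maxHeartbeats 1000000

open Finset

lemma pow_pair_le' (x y : ℝ) {i j : ℕ} (h : Even (i + j)) :
    x ^ i * y ^ j + x ^ j * y ^ i ≤ x ^ (i + j) + y ^ (i + j) := by
  have key : 0 ≤ (x ^ i - y ^ i) * (x ^ j - y ^ j) := by
    rcases Nat.even_add.mp h with hpar
    by_cases hi : Even i
    · have hj : Even j := hpar.mp hi
      rcases le_total |x| |y| with hxy | hxy
      · have h1 : x ^ i ≤ y ^ i := by
          rw [← hi.pow_abs x, ← hi.pow_abs y]
          exact pow_le_pow_left₀ (abs_nonneg x) hxy i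
        have h2 : x ^ j ≤ y ^ j := by
          rw [← hj.pow_abs x, ← hj.pow_abs y]
          exact pow_le_pow_left₀ (abs_nonneg x) hxy j
        nlinarith
      · have h1 : y ^ i ≤ x ^ i := by
          rw [← hi.pow_abs x, ← hi.pow_abs y]
          exact pow_le_pow_left₀ (abs_nonneg y) hxy i
        have h2 : y ^ j ≤ x ^ j := by
          rw [← hj.pow_abs x, ← hj.pow_abs y]
          exact pow_le_pow_left₀ (abs_nonneg y) hxy j
        exact mul_nonneg (by linarith) (by linarith)
    · have hj : ¬ Even j := fun hj => hi (hpar.mpr hj)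
      have hoi : Odd i := Nat.not_even_iff_odd.mp hi
      have hoj : Odd j := Nat.not_even_iff_odd.mp hj
      rcases le_total x y with hxy | hxy
      · have h1 : x ^ i ≤ y ^ i := (hoi.strictMono_pow (R := ℝ)).monotone hxy
        have h2 : x ^ j ≤ y ^ j := (hoj.strictMono_pow (R := ℝ)).monotone hxy
        nlinarith
      · have h1 : y ^ i ≤ x ^ i := (hoi.strictMono_pow (R := ℝ)).monotone hxy
        have h2 : y ^ j ≤ x ^ j := (hoj.strictMono_pow (R := ℝ)).monotone hxy
        exact mul_nonneg (by linarith) (by linarith)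
  have e1 : x ^ (i + j) = x ^ i * x ^ j := pow_add x i j
  have e2 : y ^ (i + j) = y ^ i * y ^ j := pow_add y i j
  nlinarith [key]

lemma odd_pow_diff_bound' (m : ℕ) (hm : Even m) (x y : ℝ) :
    2 * ((x - y) * (x ^ (m + 1) - y ^ (m + 1))) ≤
      ((m : ℝ) + 1) * ((x - y) ^ 2 * (x ^ m + y ^ m)) := by
  have hg : (∑ i ∈ range (m + 1), x ^ i * y ^ (m - i)) * (x - y)
      = x ^ (m + 1) - y ^ (m + 1) := by
    simpa using geom_sum₂_mul x y (m + 1)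
  set G := ∑ i ∈ range (m + 1), x ^ i * y ^ (m - i) with hG
  have hrefl : ∑ i ∈ range (m + 1), x ^ (m - i) * y ^ (m - (m - i)) = G := by
    simpa using Finset.sum_range_reflect (fun i => x ^ i * y ^ (m - i)) (m + 1)
  have h2G : 2 * G ≤ ((m : ℝ) + 1) * (x ^ m + y ^ m) := by
    have : 2 * G = ∑ i ∈ range (m + 1),
        (x ^ i * y ^ (m - i) + x ^ (m - i) * y ^ (m - (m - i))) := by
      rw [Finset.sum_add_distrib, hrefl, hG]; ring
    rw [this]
    have : ((m : ℝ) + 1) * (x ^ m + y ^ m)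
        = ∑ _i ∈ range (m + 1), (x ^ m + y ^ m) := by
      rw [Finset.sum_const, Finset.card_range]; push_cast; ring
    rw [this]
    apply Finset.sum_le_sum
    intro i hi
    have hile : i ≤ m := Nat.lt_succ_iff.mp (Finset.mem_range.mp hi)
    have hsub : m - (m - i) = i := Nat.sub_sub_self hile
    have hadd : i + (m - i) = m := Nat.add_sub_cancel' hile
    rw [hsub]
    have hev : Even (i + (m - i)) := by rw [hadd]; exact hm
    have := pow_pair_le' x y (i := i) (j := m - i) hev
    rwa [hadd] at this
  calc 2 * ((x - y) * (x ^ (m + 1) - y ^ (m + 1)))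
      = (2 * G) * (x - y) ^ 2 := by rw [← hg]; ring
    _ ≤ (((m : ℝ) + 1) * (x ^ m + y ^ m)) * (x - y) ^ 2 :=
        mul_le_mul_of_nonneg_right h2G (sq_nonneg _)
    _ = ((m : ℝ) + 1) * ((x - y) ^ 2 * (x ^ m + y ^ m)) := by ring

lemma holder_nat_pow' {ι : Type*} [Fintype ι] (k : ℕ) (hk : 0 < k) (u v : ι → ℝ)
    (hu : ∀ x, 0 ≤ u x) (hv : ∀ x, 0 ≤ v x) :
    (∑ x, u x * v x ^ (k - 1)) ^ k ≤ (∑ x, u x ^ k) * (∑ x, v x ^ k) ^ (k - 1) := by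
  rcases eq_or_lt_of_le (Nat.one_le_iff_ne_zero.mpr hk.ne') with h1 | h2
  · -- k = 1
    rw [← h1]; simp
  · -- k ≥ 2
    have hk1 : (1 : ℝ) < (k : ℝ) := by exact_mod_cast h2
    have hpq : (k : ℝ).HolderConjugate (Real.conjExponent (k : ℝ)) :=
      Real.HolderConjugate.conjExponent hk1
    set q : ℝ := Real.conjExponent (k : ℝ) with hq
    have hH := Real.inner_le_Lp_mul_Lq_of_nonneg (s := (univ : Finset ι)) hpq
      (f := u) (g := fun x => v x ^ (k - 1)) (fun i _ => hu i)
      (fun i _ => pow_nonneg (hv i) _)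
    -- rewrite rpow's
    have hk0 : (k : ℝ) ≠ 0 := by positivity
    have hkm1 : ((k : ℕ) - 1 : ℕ) = k - 1 := rfl
    have hkm1R : ((k - 1 : ℕ) : ℝ) = (k : ℝ) - 1 := by
      have : 1 ≤ k := hk
      push_cast [this]; ring
    have hqv : (k : ℝ) - 1 ≠ 0 := by linarith
    have e1 : ∀ x, u x ^ (k : ℝ) = u x ^ k := fun x => Real.rpow_natCast (u x) k
    have e2 : ∀ x, (v x ^ (k - 1 : ℕ)) ^ q = v x ^ k := by
      intro x
      rw [← Real.rpow_natCast (v x) (k - 1), ← Real.rpow_mul (hv x), hkm1R]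
      have : ((k : ℝ) - 1) * q = k := by
        rw [hq, Real.conjExponent]; field_simp
      rw [this, Real.rpow_natCast]
    simp only [e1, e2] at hH
    -- now hH : ∑ u * v^(k-1) ≤ (∑ u^k) ^ (1/(k:ℝ)) * (∑ v^k) ^ (1/q)
    have hA0 : (0:ℝ) ≤ ∑ x, u x ^ k := sum_nonneg fun x _ => pow_nonneg (hu x) k
    have hB0 : (0:ℝ) ≤ ∑ x, v x ^ k := sum_nonneg fun x _ => pow_nonneg (hv x) k
    have hL0 : (0:ℝ) ≤ ∑ x, u x * v x ^ (k - 1) :=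
      sum_nonneg fun x _ => mul_nonneg (hu x) (pow_nonneg (hv x) _)
    have hR0 : (0:ℝ) ≤ (∑ x, u x ^ k) ^ ((1:ℝ)/(k:ℝ)) * (∑ x, v x ^ k) ^ ((1:ℝ)/q) :=
      mul_nonneg (Real.rpow_nonneg hA0 _) (Real.rpow_nonneg hB0 _)
    have := pow_le_pow_left₀ hL0 hH k
    refine this.trans (le_of_eq ?_)
    rw [mul_pow, ← Real.rpow_natCast ((∑ x, u x ^ k) ^ ((1:ℝ)/(k:ℝ))) k,
      ← Real.rpow_natCast ((∑ x, v x ^ k) ^ ((1:ℝ)/q)) k,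
      ← Real.rpow_mul hA0, ← Real.rpow_mul hB0]
    have ea : (1:ℝ)/(k:ℝ) * (k:ℕ) = 1 := by field_simp
    have eb : (1:ℝ)/q * (k:ℕ) = (k:ℝ) - 1 := by
      rw [hq, Real.conjExponent]; field_simp
    rw [ea, eb, Real.rpow_one, ← hkm1R, Real.rpow_natCast]

open Finset

/-- The "difference" kernel `D π i j`. -/
def hsmbD {n : ℕ} (a : Fin n → Fin n → ℝ) (π : Equiv.Perm (Fin n)) (i j : Fin n) : ℝ :=
  a i (π i) + a j (π j) - a i (π j) - a j (π i)

/-- Centered Hoeffding statistic. -/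
def hsmbW {n : ℕ} (a : Fin n → Fin n → ℝ) (c : ℝ) (π : Equiv.Perm (Fin n)) : ℝ :=
  (∑ i, a i (π i)) - c

/-- The quadratic variation type quantity `Δ`. -/
noncomputable def hsmbDel {n : ℕ} (a : Fin n → Fin n → ℝ) (π : Equiv.Perm (Fin n)) : ℝ :=
  (1 / (4 * (n : ℝ))) * ∑ i, ∑ j, hsmbD a π i j ^ 2

lemma hsmb_perm_sum {n : ℕ} (σ : Equiv.Perm (Fin n)) (g : Equiv.Perm (Fin n) → ℝ) :
    ∑ π : Equiv.Perm (Fin n), g (π * σ) = ∑ π : Equiv.Perm (Fin n), g π :=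
  Equiv.sum_comp (Equiv.mulRight σ) g

lemma hsmb_reindex {n : ℕ} (π : Equiv.Perm (Fin n)) (g : Fin n → ℝ) :
    ∑ j, g (π j) = ∑ j, g j :=
  Equiv.sum_comp π g

lemma hsmb_Dswap {n : ℕ} (a : Fin n → Fin n → ℝ) (π : Equiv.Perm (Fin n)) (i j : Fin n) :
    hsmbD a (π * Equiv.swap i j) i j = - hsmbD a π i j := by
  simp only [hsmbD, Equiv.Perm.mul_apply, Equiv.swap_apply_left, Equiv.swap_apply_right]
  ring

lemma hsmb_Xswap {n : ℕ} (a : Fin n → Fin n → ℝ) (π : Equiv.Perm (Fin n)) (i j : Fin n) :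
    (∑ l, a l ((π * Equiv.swap i j) l)) = (∑ l, a l (π l)) - hsmbD a π i j := by
  by_cases hij : i = j
  · subst hij
    simp [hsmbD, Equiv.swap_self]
  · have key : ∑ l, (a l ((π * Equiv.swap i j) l) - a l (π l)) = - hsmbD a π i j := by
      have hsub : ∑ l ∈ ({i, j} : Finset (Fin n)), (a l ((π * Equiv.swap i j) l) - a l (π l))
          = ∑ l, (a l ((π * Equiv.swap i j) l) - a l (π l)) := by
        refine Finset.sum_subset (Finset.subset_univ _) ?_
        intro l _ hl
        simp only [Finset.mem_insert, Finset.mem_singleton] at hl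
        push_neg at hl
        rw [Equiv.Perm.mul_apply, Equiv.swap_apply_of_ne_of_ne hl.1 hl.2, sub_self]
      rw [← hsub, Finset.sum_pair hij]
      simp only [hsmbD, Equiv.Perm.mul_apply, Equiv.swap_apply_left, Equiv.swap_apply_right]
      ring
    have hsplit : ∑ l, (a l ((π * Equiv.swap i j) l) - a l (π l))
        = (∑ l, a l ((π * Equiv.swap i j) l)) - ∑ l, a l (π l) := Finset.sum_sub_distrib _ _
    linarith [key, hsplit.symm.trans key]

lemma hsmb_sumD {n : ℕ} (a : Fin n → Fin n → ℝ) (π : Equiv.Perm (Fin n)) :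
    ∑ i, ∑ j, hsmbD a π i j
      = 2 * (n : ℝ) * (∑ i, a i (π i)) - 2 * ∑ i, ∑ j, a i j := by
  have p1 : ∑ i : Fin n, ∑ j : Fin n, a i (π j) = ∑ i, ∑ j, a i j :=
    Finset.sum_congr rfl fun i _ => hsmb_reindex π (a i)
  have p2 : ∑ i : Fin n, ∑ j : Fin n, a j (π i) = ∑ i, ∑ j, a i j := by
    have hcomm : ∑ i : Fin n, ∑ j : Fin n, a j (π i) = ∑ j : Fin n, ∑ i : Fin n, a j (π i) :=
      Finset.sum_comm
    rw [hcomm]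
    exact Finset.sum_congr rfl fun j _ => hsmb_reindex π (a j)
  have p3 : ∑ i : Fin n, ∑ _j : Fin n, a i (π i) = (n : ℝ) * ∑ i, a i (π i) := by
    simp [Finset.sum_const, Finset.card_univ, Finset.mul_sum, mul_comm]
  have p4 : ∑ _i : Fin n, ∑ j : Fin n, a j (π j) = (n : ℝ) * ∑ i, a i (π i) := by
    simp [Finset.sum_const, Finset.card_univ]
  calc ∑ i, ∑ j, hsmbD a π i j
      = (∑ i : Fin n, ∑ j : Fin n, a i (π i)) + (∑ i : Fin n, ∑ j : Fin n, a j (π j))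
        - (∑ i : Fin n, ∑ j : Fin n, a i (π j)) - (∑ i : Fin n, ∑ j : Fin n, a j (π i)) := by
        simp only [hsmbD, Finset.sum_add_distrib, Finset.sum_sub_distrib]
    _ = 2 * (n : ℝ) * (∑ i, a i (π i)) - 2 * ∑ i, ∑ j, a i j := by
        rw [p1, p2, p3, p4]; ring

lemma hsmb_sumX {n : ℕ} (a : Fin n → Fin n → ℝ) :
    (n : ℝ) * ∑ π : Equiv.Perm (Fin n), ∑ i, a i (π i)
      = ((Nat.factorial n : ℝ)) * ∑ i, ∑ j, a i j := by
  have h1 : ∀ i j : Fin n, ∑ π : Equiv.Perm (Fin n), a i (π j)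
      = ∑ π : Equiv.Perm (Fin n), a i (π i) := by
    intro i j
    have := hsmb_perm_sum (Equiv.swap i j) (fun π => a i (π i))
    simpa [Equiv.Perm.mul_apply, Equiv.swap_apply_left] using this
  have main : ∀ i : Fin n, (n : ℝ) * (∑ π : Equiv.Perm (Fin n), a i (π i))
      = ((Nat.factorial n : ℝ)) * ∑ j, a i j := by
    intro i
    calc (n : ℝ) * (∑ π : Equiv.Perm (Fin n), a i (π i))
        = ∑ _j : Fin n, ∑ π : Equiv.Perm (Fin n), a i (π i) := by
          simp [Finset.sum_const, Finset.card_univ]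
      _ = ∑ j : Fin n, ∑ π : Equiv.Perm (Fin n), a i (π j) :=
          Finset.sum_congr rfl fun j _ => (h1 i j).symm
      _ = ∑ π : Equiv.Perm (Fin n), ∑ j : Fin n, a i (π j) := Finset.sum_comm
      _ = ∑ _π : Equiv.Perm (Fin n), ∑ j, a i j :=
          Finset.sum_congr rfl fun π _ => hsmb_reindex π (a i)
      _ = ((Nat.factorial n : ℝ)) * ∑ j, a i j := by
          simp [Finset.sum_const, Finset.card_univ, Fintype.card_perm, Fintype.card_fin]
  have hcomm : ∑ π : Equiv.Perm (Fin n), ∑ i, a i (π i)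
      = ∑ i, ∑ π : Equiv.Perm (Fin n), a i (π i) := Finset.sum_comm
  calc (n : ℝ) * ∑ π : Equiv.Perm (Fin n), ∑ i, a i (π i)
      = ∑ i, (n : ℝ) * ∑ π : Equiv.Perm (Fin n), a i (π i) := by
        rw [hcomm, Finset.mul_sum]
    _ = ∑ i, ((Nat.factorial n : ℝ)) * ∑ j, a i j := Finset.sum_congr rfl fun i _ => main i
    _ = ((Nat.factorial n : ℝ)) * ∑ i, ∑ j, a i j := (Finset.mul_sum _ _ _).symm

lemma hsmb_core (n k : ℕ) (hn : 0 < n) (hk : 0 < k) (a : Fin n → Fin n → ℝ) (c : ℝ)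
    (hc : (n : ℝ) * c = ∑ i, ∑ j, a i j) :
    ∑ π : Equiv.Perm (Fin n), hsmbW a c π ^ (2 * k)
      ≤ (2 * (k : ℝ) - 1) ^ k * ∑ π : Equiv.Perm (Fin n), hsmbDel a π ^ k := by
  have hn' : (0 : ℝ) < n := by exact_mod_cast hn
  set m := 2 * (k - 1) with hm
  have hmev : Even m := even_two_mul _
  have h2k : 2 * k = m + 2 := by omega
  have hmR : 2 * (k : ℝ) - 1 = (m : ℝ) + 1 := by
    rw [hm, Nat.cast_mul, Nat.cast_sub hk]
    push_cast; ring
  have hWswap : ∀ (π : Equiv.Perm (Fin n)) (i j : Fin n),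
      hsmbW a c (π * Equiv.swap i j) = hsmbW a c π - hsmbD a π i j := by
    intro π i j
    simp only [hsmbW]
    rw [hsmb_Xswap]
    ring
  have hDsumW : ∀ π : Equiv.Perm (Fin n),
      ∑ i, ∑ j, hsmbD a π i j = 2 * (n : ℝ) * hsmbW a c π := by
    intro π
    rw [hsmb_sumD]
    simp only [hsmbW]
    rw [← hc]; ring
  have hΔsum : ∀ π : Equiv.Perm (Fin n),
      ∑ i, ∑ j, hsmbD a π i j ^ 2 = 4 * (n : ℝ) * hsmbDel a π := by
    intro π
    simp only [hsmbDel]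
    field_simp
  set A := ∑ π : Equiv.Perm (Fin n), hsmbW a c π ^ (m + 2) with hA
  set C := ∑ π : Equiv.Perm (Fin n), hsmbDel a π * hsmbW a c π ^ m with hC
  set B := ∑ π : Equiv.Perm (Fin n), hsmbDel a π ^ k with hB
  set T := ∑ π : Equiv.Perm (Fin n), ∑ i, ∑ j, hsmbD a π i j * hsmbW a c π ^ (m + 1) with hT
  have tri : ∀ g : Equiv.Perm (Fin n) → Fin n → Fin n → ℝ,
      ∑ π : Equiv.Perm (Fin n), ∑ i, ∑ j, g π i j
        = ∑ i, ∑ j, ∑ π : Equiv.Perm (Fin n), g π i j := by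
    intro g
    exact (Finset.sum_comm).trans (Finset.sum_congr rfl fun i _ => Finset.sum_comm)
  have hTneg : ∑ π : Equiv.Perm (Fin n), ∑ i, ∑ j,
      hsmbD a π i j * hsmbW a c (π * Equiv.swap i j) ^ (m + 1) = -T := by
    calc ∑ π : Equiv.Perm (Fin n), ∑ i, ∑ j,
        hsmbD a π i j * hsmbW a c (π * Equiv.swap i j) ^ (m + 1)
        = ∑ i, ∑ j, ∑ π : Equiv.Perm (Fin n),
            hsmbD a π i j * hsmbW a c (π * Equiv.swap i j) ^ (m + 1) := tri _
      _ = ∑ i, ∑ j, ∑ π : Equiv.Perm (Fin n),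
            (- hsmbD a π i j) * hsmbW a c π ^ (m + 1) := by
          refine Finset.sum_congr rfl fun i _ => Finset.sum_congr rfl fun j _ => ?_
          have hs := hsmb_perm_sum (Equiv.swap i j)
            (fun π => hsmbD a π i j * hsmbW a c (π * Equiv.swap i j) ^ (m + 1))
          rw [← hs]
          refine Finset.sum_congr rfl fun π _ => ?_
          rw [hsmb_Dswap, mul_assoc, Equiv.swap_mul_self, mul_one]
      _ = - ∑ i, ∑ j, ∑ π : Equiv.Perm (Fin n),
            hsmbD a π i j * hsmbW a c π ^ (m + 1) := by
          simp [neg_mul, Finset.sum_neg_distrib]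
      _ = -T := by rw [hT]; exact congrArg Neg.neg (tri _).symm
  have hsqswap : ∑ π : Equiv.Perm (Fin n), ∑ i, ∑ j,
      hsmbD a π i j ^ 2 * hsmbW a c (π * Equiv.swap i j) ^ m
      = ∑ π : Equiv.Perm (Fin n), ∑ i, ∑ j, hsmbD a π i j ^ 2 * hsmbW a c π ^ m := by
    calc ∑ π : Equiv.Perm (Fin n), ∑ i, ∑ j,
        hsmbD a π i j ^ 2 * hsmbW a c (π * Equiv.swap i j) ^ m
        = ∑ i, ∑ j, ∑ π : Equiv.Perm (Fin n),
            hsmbD a π i j ^ 2 * hsmbW a c (π * Equiv.swap i j) ^ m := tri _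
      _ = ∑ i, ∑ j, ∑ π : Equiv.Perm (Fin n), hsmbD a π i j ^ 2 * hsmbW a c π ^ m := by
          refine Finset.sum_congr rfl fun i _ => Finset.sum_congr rfl fun j _ => ?_
          have hs := hsmb_perm_sum (Equiv.swap i j)
            (fun π => hsmbD a π i j ^ 2 * hsmbW a c (π * Equiv.swap i j) ^ m)
          rw [← hs]
          refine Finset.sum_congr rfl fun π _ => ?_
          rw [hsmb_Dswap, mul_assoc, Equiv.swap_mul_self, mul_one, neg_sq]
      _ = ∑ π : Equiv.Perm (Fin n), ∑ i, ∑ j, hsmbD a π i j ^ 2 * hsmbW a c π ^ m :=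
          (tri _).symm
  have hTA : T = 2 * (n : ℝ) * A := by
    rw [hT, hA, Finset.mul_sum]
    refine Finset.sum_congr rfl fun π _ => ?_
    have e1 : ∑ i, ∑ j, hsmbD a π i j * hsmbW a c π ^ (m + 1)
        = (∑ i, ∑ j, hsmbD a π i j) * hsmbW a c π ^ (m + 1) := by
      rw [Finset.sum_mul]
      exact Finset.sum_congr rfl fun i _ => (Finset.sum_mul _ _ _).symm
    rw [e1, hDsumW π]
    ring
  have hkey : 4 * T ≤ 2 * ((m : ℝ) + 1) *
      ∑ π : Equiv.Perm (Fin n), ∑ i, ∑ j, hsmbD a π i j ^ 2 * hsmbW a c π ^ m := by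
    have step : ∑ π : Equiv.Perm (Fin n), ∑ i, ∑ j,
        (2 * (hsmbD a π i j * hsmbW a c π ^ (m + 1))
          - 2 * (hsmbD a π i j * hsmbW a c (π * Equiv.swap i j) ^ (m + 1))) = 4 * T := by
      simp only [Finset.sum_sub_distrib, ← Finset.mul_sum]
      rw [← hT, hTneg]
      ring
    have expand : 4 * T = ∑ π : Equiv.Perm (Fin n), ∑ i, ∑ j,
        2 * ((hsmbW a c π - hsmbW a c (π * Equiv.swap i j)) *
          (hsmbW a c π ^ (m + 1) - hsmbW a c (π * Equiv.swap i j) ^ (m + 1))) := by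
      rw [← step]
      refine Finset.sum_congr rfl fun π _ => Finset.sum_congr rfl fun i _ =>
        Finset.sum_congr rfl fun j _ => ?_
      rw [hWswap π i j]
      ring
    rw [expand]
    calc ∑ π : Equiv.Perm (Fin n), ∑ i, ∑ j,
        2 * ((hsmbW a c π - hsmbW a c (π * Equiv.swap i j)) *
          (hsmbW a c π ^ (m + 1) - hsmbW a c (π * Equiv.swap i j) ^ (m + 1)))
        ≤ ∑ π : Equiv.Perm (Fin n), ∑ i, ∑ j,
            ((m : ℝ) + 1) * ((hsmbW a c π - hsmbW a c (π * Equiv.swap i j)) ^ 2 *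
              (hsmbW a c π ^ m + hsmbW a c (π * Equiv.swap i j) ^ m)) := by
          refine Finset.sum_le_sum fun π _ => Finset.sum_le_sum fun i _ =>
            Finset.sum_le_sum fun j _ => odd_pow_diff_bound' m hmev _ _
      _ = ∑ π : Equiv.Perm (Fin n), ∑ i, ∑ j,
            (((m : ℝ) + 1) * (hsmbD a π i j ^ 2 * hsmbW a c π ^ m)
              + ((m : ℝ) + 1) * (hsmbD a π i j ^ 2 * hsmbW a c (π * Equiv.swap i j) ^ m)) := by
          refine Finset.sum_congr rfl fun π _ => Finset.sum_congr rfl fun i _ =>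
            Finset.sum_congr rfl fun j _ => ?_
          have hsub2 : hsmbW a c π - hsmbW a c (π * Equiv.swap i j) = hsmbD a π i j := by
            rw [hWswap π i j]; ring
          rw [hsub2]
          ring
      _ = ((m : ℝ) + 1) * (∑ π : Equiv.Perm (Fin n), ∑ i, ∑ j,
              hsmbD a π i j ^ 2 * hsmbW a c π ^ m)
            + ((m : ℝ) + 1) * (∑ π : Equiv.Perm (Fin n), ∑ i, ∑ j,
              hsmbD a π i j ^ 2 * hsmbW a c (π * Equiv.swap i j) ^ m) := by
          simp only [Finset.sum_add_distrib, ← Finset.mul_sum]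
      _ = 2 * ((m : ℝ) + 1) *
            ∑ π : Equiv.Perm (Fin n), ∑ i, ∑ j, hsmbD a π i j ^ 2 * hsmbW a c π ^ m := by
          rw [hsqswap]; ring
  have hQ : ∑ π : Equiv.Perm (Fin n), ∑ i, ∑ j, hsmbD a π i j ^ 2 * hsmbW a c π ^ m
      = 4 * (n : ℝ) * C := by
    rw [hC, Finset.mul_sum]
    refine Finset.sum_congr rfl fun π _ => ?_
    have e1 : ∑ i, ∑ j, hsmbD a π i j ^ 2 * hsmbW a c π ^ m
        = (∑ i, ∑ j, hsmbD a π i j ^ 2) * hsmbW a c π ^ m := by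
      rw [Finset.sum_mul]
      exact Finset.sum_congr rfl fun i _ => (Finset.sum_mul _ _ _).symm
    rw [e1, hΔsum π]
    ring
  have hAC : A ≤ ((m : ℝ) + 1) * C := by
    have hkey2 := hkey
    rw [hTA, hQ] at hkey2
    have h8 : (0 : ℝ) < 8 * (n : ℝ) := by positivity
    have h2 : (8 * (n : ℝ)) * A ≤ (8 * (n : ℝ)) * (((m : ℝ) + 1) * C) := by nlinarith [hkey2]
    exact le_of_mul_le_mul_left h2 h8
  have hΔ0 : ∀ π : Equiv.Perm (Fin n), 0 ≤ hsmbDel a π := by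
    intro π
    simp only [hsmbDel]
    positivity
  have hACk : C = ∑ π : Equiv.Perm (Fin n), hsmbDel a π * (hsmbW a c π ^ 2) ^ (k - 1) := by
    rw [hC]
    refine Finset.sum_congr rfl fun π _ => ?_
    rw [← pow_mul, hm]
  have hAk : A = ∑ π : Equiv.Perm (Fin n), (hsmbW a c π ^ 2) ^ k := by
    rw [hA]
    refine Finset.sum_congr rfl fun π _ => ?_
    rw [← pow_mul, h2k]
  have hholder : C ^ k ≤ B * A ^ (k - 1) := by
    rw [hACk, hAk, hB]
    exact holder_nat_pow' k hk (hsmbDel a) (fun π => hsmbW a c π ^ 2) hΔ0 (fun π => sq_nonneg _)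
  have hA0 : 0 ≤ A := by
    rw [hAk]; exact Finset.sum_nonneg fun π _ => pow_nonneg (sq_nonneg _) k
  have hB0 : 0 ≤ B := by
    rw [hB]; exact Finset.sum_nonneg fun π _ => pow_nonneg (hΔ0 π) k
  have hfinal : A ≤ ((m : ℝ) + 1) ^ k * B := by
    rcases eq_or_lt_of_le hA0 with h0 | hpos
    · rw [← h0]; positivity
    · have h1 : A ^ k ≤ (((m : ℝ) + 1) * C) ^ k := pow_le_pow_left₀ hA0 hAC k
      have h2 : A ^ k ≤ ((m : ℝ) + 1) ^ k * (B * A ^ (k - 1)) := by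
        rw [mul_pow] at h1
        exact h1.trans (mul_le_mul_of_nonneg_left hholder (by positivity))
      have h3 : A ^ k = A * A ^ (k - 1) := by
        conv_lhs => rw [show k = (k - 1) + 1 from (Nat.succ_pred_eq_of_pos hk).symm]
        rw [pow_succ]
        ring
      have h4 : A * A ^ (k - 1) ≤ (((m : ℝ) + 1) ^ k * B) * A ^ (k - 1) := by
        rw [← h3]
        calc A ^ k ≤ ((m : ℝ) + 1) ^ k * (B * A ^ (k - 1)) := h2
          _ = (((m : ℝ) + 1) ^ k * B) * A ^ (k - 1) := by ring
      exact le_of_mul_le_mul_right h4 (pow_pos hpos _)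
  have hgoalA : ∑ π : Equiv.Perm (Fin n), hsmbW a c π ^ (2 * k) = A := by
    rw [hA]
    exact Finset.sum_congr rfl fun π _ => by rw [h2k]
  rw [hgoalA, hmR]
  exact hfinal


/-- **Proposition 1.2 (Burkholder–Davis–Gundy type inequality for Hoeffding's statistic).**
Let `{a i j}` be arbitrary reals, `π` a uniformly random permutation of `{1,…,n}`,
`X = ∑ i, a i (π i)`, and
`Δ = (1/(4n)) ∑_{i,j} (a i (π i) + a j (π j) - a i (π j) - a j (π i))²`.
Then for every positive integer `k`, `E (X - E X)^{2k} ≤ (2k-1)^k E Δ^k`.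
Expectations under the uniform measure on `S_n` are expressed as sums over all
permutations divided by `n!`. -/
theorem hoeffding_statistic_moment_bound
    (n : ℕ) (a : Fin n → Fin n → ℝ)
    (X : Equiv.Perm (Fin n) → ℝ) (hX : ∀ π, X π = ∑ i, a i (π i))
    (EX : ℝ) (hEX : EX = (∑ π : Equiv.Perm (Fin n), X π) / (Nat.factorial n))
    (Δ : Equiv.Perm (Fin n) → ℝ)
    (hΔ : ∀ π, Δ π = (1 / (4 * n)) *
      ∑ i, ∑ j, (a i (π i) + a j (π j) - a i (π j) - a j (π i)) ^ 2)
    (k : ℕ) (hk : 0 < k) :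
    (∑ π : Equiv.Perm (Fin n), (X π - EX) ^ (2 * k)) / (Nat.factorial n)
      ≤ ((2 * k : ℝ) - 1) ^ k *
        ((∑ π : Equiv.Perm (Fin n), Δ π ^ k) / (Nat.factorial n)) := by

  by_cases hn : n = 0
  · subst hn
    have hX0 : ∀ π : Equiv.Perm (Fin 0), X π = 0 := by intro π; rw [hX]; simp
    have hΔ0 : ∀ π : Equiv.Perm (Fin 0), Δ π = 0 := by intro π; rw [hΔ]; simp
    have hEX0 : EX = 0 := by rw [hEX]; simp [hX0]
    simp [hX0, hΔ0, hEX0, zero_pow, (by omega : 2 * k ≠ 0), hk.ne']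
  · have hnpos : 0 < n := Nat.pos_of_ne_zero hn
    have hN : (0 : ℝ) < (Nat.factorial n : ℝ) := by exact_mod_cast Nat.factorial_pos n
    have hc : (n : ℝ) * EX = ∑ i, ∑ j, a i j := by
      have h2 := hsmb_sumX a
      have hXsum : ∑ π : Equiv.Perm (Fin n), X π
          = ∑ π : Equiv.Perm (Fin n), ∑ i, a i (π i) :=
        Finset.sum_congr rfl fun π _ => hX π
      have h3 : (n : ℝ) * (∑ π : Equiv.Perm (Fin n), ∑ i, a i (π i))
          / (Nat.factorial n : ℝ) = ∑ i, ∑ j, a i j := by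
        rw [h2, mul_div_cancel_left₀ _ hN.ne']
      rw [hEX, hXsum]
      rw [mul_div_assoc] at h3
      exact h3
    have hcore := hsmb_core n k hnpos hk a EX hc
    have hL : ∑ π : Equiv.Perm (Fin n), (X π - EX) ^ (2 * k)
        = ∑ π : Equiv.Perm (Fin n), hsmbW a EX π ^ (2 * k) :=
      Finset.sum_congr rfl fun π _ => by rw [hX]; rfl
    have hR : ∑ π : Equiv.Perm (Fin n), Δ π ^ k
        = ∑ π : Equiv.Perm (Fin n), hsmbDel a π ^ k :=
      Finset.sum_congr rfl fun π _ => by rw [hΔ]; rfl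
    rw [hL, hR, ← mul_div_assoc]
    exact div_le_div_of_nonneg_right hcore hN.le
end

section
/- Let X be the number of fixed points of a uniformly random permutation π of {1, …, n}. Then for every t ≥ 0, P(|X - 1| ≥ t) ≤ 2 exp(-t² / (4 + 2t)). -/
/-!
A permutation with at least `k` fixed points fixes some `k`-subset pointwise. Each of the
`n.choose k` such subsets is fixed by `(n - k)!` permutations, so the union bound gives
`P(X ≥ k) ≤ 1 / k!`. Since `|X - 1| ≥ t > 1` forces `X ≥ t + 1`, the event has probability at
most `1 / ⌈t⌉₊!` (trivially so when `t ≤ 1`). Finally `e^{k/2} ≤ 2^k ≤ 2 k!` and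
`t² / (4 + 2t) ≤ t / 2` give `1 / ⌈t⌉₊! ≤ 2 e^{-t/2} ≤ 2 e^{-t²/(4 + 2t)}`.
-/

open Finset
open scoped Nat

namespace Equiv.Perm

variable {α : Type*} [Fintype α] [DecidableEq α]

theorem card_fixing_pointwise (s : Finset α) :
    #{σ : Perm α | ∀ a ∈ s, σ a = a} = (Fintype.card α - #s)! := by
  rw [← Fintype.card_subtype,
    Fintype.card_congr ((Equiv.subtypeEquivRight fun σ => by simp only [not_not]).trans
      (Perm.subtypeEquivSubtypePerm (· ∉ s)).symm),
    Fintype.card_perm, Fintype.card_subtype_compl, Fintype.card_coe]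

theorem card_le_card_fixedPoints_le_choose_mul_factorial (k : ℕ) :
    #{σ : Perm α | k ≤ #{a | σ a = a}} ≤ (Fintype.card α).choose k * (Fintype.card α - k)! :=
  calc #{σ : Perm α | k ≤ #{a | σ a = a}}
      ≤ #((univ.powersetCard k).biUnion fun s => {σ : Perm α | ∀ a ∈ s, σ a = a}) := by
        refine card_le_card fun σ hσ => ?_
        obtain ⟨s, hs, rfl⟩ := exists_subset_card_eq (mem_filter.1 hσ).2
        exact mem_biUnion.2 ⟨s, mem_powersetCard_univ.2 rfl,
          mem_filter.2 ⟨mem_univ _, fun a ha => (mem_filter.1 (hs ha)).2⟩⟩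
    _ ≤ ∑ s ∈ univ.powersetCard k, #{σ : Perm α | ∀ a ∈ s, σ a = a} := card_biUnion_le
    _ = (Fintype.card α).choose k * (Fintype.card α - k)! := by
        rw [sum_congr rfl fun s hs => by rw [card_fixing_pointwise, (mem_powersetCard.1 hs).2],
          sum_const, card_powersetCard, card_univ, smul_eq_mul]

theorem card_le_card_fixedPoints_mul_factorial_le (k : ℕ) :
    #{σ : Perm α | k ≤ #{a | σ a = a}} * k ! ≤ (Fintype.card α)! := by
  rcases le_or_gt k (Fintype.card α) with hk | hk
  · calc _ ≤ (Fintype.card α).choose k * (Fintype.card α - k)! * k ! :=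
          Nat.mul_le_mul_right _ (card_le_card_fixedPoints_le_choose_mul_factorial k)
      _ = (Fintype.card α)! := by
          rw [mul_right_comm, Nat.choose_mul_factorial_mul_factorial hk]
  · have h := card_le_card_fixedPoints_le_choose_mul_factorial (α := α) k
    rw [Nat.choose_eq_zero_of_lt hk, zero_mul, Nat.le_zero] at h
    simp [h]

theorem card_le_abs_card_fixedPoints_sub_one_mul_factorial_le (t : ℝ) :
    #{σ : Perm α | t ≤ |(#{a | σ a = a} : ℝ) - 1|} * ⌈t⌉₊ ! ≤ (Fintype.card α)! := by
  rcases le_or_gt t 1 with ht | ht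
  · rw [Nat.factorial_eq_one.2 (Nat.ceil_le.2 (by exact_mod_cast ht)), mul_one,
      ← Fintype.card_perm]
    exact card_filter_le _ _
  · refine le_trans (Nat.mul_le_mul_right _ (card_le_card (monotone_filter_right _ ?_)))
      (card_le_card_fixedPoints_mul_factorial_le _)
    intro σ _ hσ
    have hX : t + 1 ≤ (#{a | σ a = a} : ℝ) := by
      rcases le_abs'.1 hσ with h | h <;> linarith [(#{a | σ a = a}).cast_nonneg (α := ℝ)]
    exact Nat.ceil_le.2 (by linarith)

end Equiv.Perm

theorem Nat.two_pow_le_two_mul_factorial : ∀ m : ℕ, 2 ^ m ≤ 2 * m !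
  | 0 => by norm_num
  | m + 1 => by
    rw [pow_succ']
    refine Nat.mul_le_mul_left 2 ?_
    simpa [add_comm] using Nat.factorial_mul_pow_le_factorial (m := 1) (n := m)

theorem Real.one_div_factorial_le_two_mul_exp (m : ℕ) :
    1 / (m ! : ℝ) ≤ 2 * Real.exp (-m / 2) := by
  have hexp : Real.exp (1 / 2) ≤ 2 := by
    rw [← Real.le_log_iff_exp_le two_pos]
    linarith [Real.log_two_gt_d9]
  have h : Real.exp (m / 2) ≤ 2 * m ! :=
    calc Real.exp (m / 2) = Real.exp (1 / 2) ^ m := by rw [← Real.exp_nat_mul]; ring_nf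
      _ ≤ 2 ^ m := by gcongr
      _ ≤ 2 * m ! := by exact_mod_cast Nat.two_pow_le_two_mul_factorial m
  rw [neg_div, Real.exp_neg, ← div_eq_mul_inv, div_le_div_iff₀ (by positivity) (by positivity)]
  linarith

theorem sq_div_four_add_two_mul_le_half {t : ℝ} (ht : 0 ≤ t) : t ^ 2 / (4 + 2 * t) ≤ t / 2 := by
  rw [div_le_div_iff₀ (by positivity) two_pos]
  nlinarith

theorem fixed_points_concentration_general
    (n : ℕ)
    (X : Equiv.Perm (Fin n) → ℝ)
    (hX : ∀ π, X π = ((Finset.univ.filter (fun i : Fin n => π i = i)).card : ℝ))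
    (t : ℝ) (ht : 0 ≤ t) :
    ((Finset.univ.filter (fun π : Equiv.Perm (Fin n) => t ≤ |X π - 1|)).card : ℝ)
        / (Nat.factorial n)
      ≤ 2 * Real.exp (-t ^ 2 / (4 + 2 * t)) := by
  have htail := Equiv.Perm.card_le_abs_card_fixedPoints_sub_one_mul_factorial_le (α := Fin n) t
  rw [Fintype.card_fin] at htail
  simp_rw [hX]
  calc _ ≤ 1 / (⌈t⌉₊ ! : ℝ) := by
        rw [div_le_div_iff₀ (by positivity) (by positivity), one_mul]
        exact_mod_cast htail
    _ ≤ 2 * Real.exp (-⌈t⌉₊ / 2) := Real.one_div_factorial_le_two_mul_exp _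
    _ ≤ 2 * Real.exp (-t / 2) := by gcongr; exact Nat.le_ceil t
    _ ≤ 2 * Real.exp (-t ^ 2 / (4 + 2 * t)) := by
        rw [neg_div, neg_div]
        gcongr 2 * Real.exp (-?_)
        exact sq_div_four_add_two_mul_le_half ht

/-- **Concentration of the number of fixed points of a random permutation.**
Let `X` be the number of fixed points of a uniformly random permutation `π` of `{1,…,n}`
(whose expectation is `1`). Then `P(|X - 1| ≥ t) ≤ 2 exp(-t²/(4 + 2t))` for all `t ≥ 0`.
The probability under the uniform measure on `S_n` is expressed as a normalized count. -/
theorem fixed_points_concentration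
    (n : ℕ) (hn : 1 ≤ n)
    (X : Equiv.Perm (Fin n) → ℝ)
    (hX : ∀ π, X π = ((Finset.univ.filter (fun i : Fin n => π i = i)).card : ℝ))
    (t : ℝ) (ht : 0 ≤ t) :
    ((Finset.univ.filter (fun π : Equiv.Perm (Fin n) => t ≤ |X π - 1|)).card : ℝ)
        / (Nat.factorial n)
      ≤ 2 * Real.exp (-t ^ 2 / (4 + 2 * t)) :=
  fixed_points_concentration_general n X hX t ht
end
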